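/- arXiv:math/0204359 — 8 statements merged into one kernel-verified Lean document; each statement's English description precedes it below -/
import Mathlib

section
/- Let Λ be a discrete additive subgroup of ℝⁿ such that the quotient ℝⁿ/Λ is compact, and let x ∈ ℝⁿ. Then the set of integer multiples {m•x : m ∈ ℤ}, taken modulo Λ, is dense in ℝⁿ/Λ if and only if there do not exist a nonzero integer r, an element λ ∈ Λ, and a subgroup Λ₁ of Λ of ℤ-rank strictly less than n such that r•x + λ lies in the ℝ-linear span of Λ₁ in ℝⁿ. -/
open Submodule Module Filter Topology Pointwise

set_option linter.unusedSectionVars false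

section Helpers

variable {E : Type*} [NormedAddCommGroup E] [NormedSpace ℝ E] [FiniteDimensional ℝ E]

/-- L1': a closed subgroup of a finite-dimensional normed space containing no line
is uniformly discrete near 0. -/
theorem exists_eps_of_no_line (H : AddSubgroup E) (hH : IsClosed (H : Set E))
    (hline : ∀ u : E, u ≠ 0 → ∃ t : ℝ, t • u ∉ H) :
    ∃ ε > (0:ℝ), ∀ h ∈ H, ‖h‖ < ε → h = 0 := by
  by_contra hcon
  push_neg at hcon
  have hseq : ∀ k : ℕ, ∃ h : E, h ∈ H ∧ ‖h‖ < 1 / (k + 1) ∧ h ≠ 0 := by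
    intro k
    obtain ⟨h, hmem, hlt, hne⟩ := hcon (1 / (k + 1)) (by positivity)
    exact ⟨h, hmem, hlt, hne⟩
  choose h hmem hlt hne using hseq
  have hnorm_pos : ∀ k, (0:ℝ) < ‖h k‖ := fun k => norm_pos_iff.2 (hne k)
  set u : ℕ → E := fun k => ‖h k‖⁻¹ • h k with hu
  have hu_sphere : ∀ k, u k ∈ Metric.sphere (0:E) 1 := by
    intro k
    simp only [Metric.mem_sphere, dist_zero_right, hu, norm_smul, norm_inv, norm_norm]
    exact inv_mul_cancel₀ (hnorm_pos k).ne'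
  obtain ⟨u₀, hu₀mem, φ, hφmono, hφtend⟩ :=
    (isCompact_sphere (0:E) 1).tendsto_subseq hu_sphere
  have hu₀ : ‖u₀‖ = 1 := by simpa [dist_zero_right] using hu₀mem
  have hu₀ne : u₀ ≠ 0 := fun h0 => by simp [h0] at hu₀
  -- the norms of the subsequence tend to 0
  have hnorm_tend : Tendsto (fun k => ‖h (φ k)‖) atTop (𝓝 0) := by
    have : Tendsto (fun k : ℕ => 1 / ((k:ℝ) + 1)) atTop (𝓝 0) := by
      simpa using tendsto_one_div_add_atTop_nhds_zero_nat (𝕜 := ℝ)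
    refine squeeze_zero (fun k => (hnorm_pos _).le) (fun k => ?_) this
    calc ‖h (φ k)‖ ≤ 1 / ((φ k : ℝ) + 1) := (hlt (φ k)).le
      _ ≤ 1 / ((k:ℝ) + 1) := by
          apply one_div_le_one_div_of_le (by positivity)
          have := hφmono.id_le k
          have : (k:ℝ) ≤ (φ k : ℝ) := Nat.cast_le.2 this
          linarith
  -- every real multiple of u₀ is in H
  have hline' : ∀ t : ℝ, t • u₀ ∈ H := by
    intro t
    have key : Tendsto (fun k => (⌊t / ‖h (φ k)‖⌋ : ℤ) • h (φ k)) atTop (𝓝 (t • u₀)) := by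
      rw [tendsto_iff_norm_sub_tendsto_zero]
      have hbound : ∀ k, ‖(⌊t / ‖h (φ k)‖⌋ : ℤ) • h (φ k) - t • u₀‖ ≤
          ‖h (φ k)‖ + |t| * ‖u (φ k) - u₀‖ := by
        intro k
        set r := ‖h (φ k)‖ with hr
        have hr0 : (0:ℝ) < r := hnorm_pos _
        have hrepr : h (φ k) = r • u (φ k) := by
          rw [hu]; simp [smul_smul, mul_inv_cancel₀ hr0.ne']
          rw [hr, mul_inv_cancel₀ (hnorm_pos _).ne', one_smul]
        have step1 : (⌊t / r⌋ : ℤ) • h (φ k) = ((⌊t / r⌋ : ℝ) * r) • u (φ k) := by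
          rw [hrepr, ← Int.cast_smul_eq_zsmul ℝ, smul_smul]
        have hunorm : ‖u (φ k)‖ = 1 := by
          simpa [dist_zero_right] using hu_sphere (φ k)
        have hsplit : (⌊t / r⌋ : ℤ) • h (φ k) - t • u₀ =
            (((⌊t / r⌋ : ℝ) * r - t) • u (φ k)) + (t • u (φ k) - t • u₀) := by
          rw [step1, sub_smul]; abel
        calc ‖(⌊t / r⌋ : ℤ) • h (φ k) - t • u₀‖
            = ‖(((⌊t / r⌋ : ℝ) * r - t) • u (φ k)) + (t • u (φ k) - t • u₀)‖ := by
              rw [hsplit]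
          _ ≤ ‖((⌊t / r⌋ : ℝ) * r - t) • u (φ k)‖ + ‖t • u (φ k) - t • u₀‖ :=
              norm_add_le _ _
          _ ≤ r + |t| * ‖u (φ k) - u₀‖ := by
              apply add_le_add
              · rw [norm_smul, hunorm, mul_one, Real.norm_eq_abs]
                have h1 : t / r - 1 < (⌊t / r⌋ : ℝ) := Int.sub_one_lt_floor _
                have h2 : (⌊t / r⌋ : ℝ) ≤ t / r := Int.floor_le _
                have e1 : (t/r)*r = t := div_mul_cancel₀ t hr0.ne'
                rw [abs_le]
                constructor <;>
                  nlinarith [mul_le_mul_of_nonneg_right h2 hr0.le,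
                    mul_lt_mul_of_pos_right h1 hr0]
              · rw [← smul_sub, norm_smul, Real.norm_eq_abs]
      refine squeeze_zero (fun k => norm_nonneg _) hbound ?_
      have h2 : Tendsto (fun k => |t| * ‖u (φ k) - u₀‖) atTop (𝓝 0) := by
        have : Tendsto (fun k => ‖u (φ k) - u₀‖) atTop (𝓝 0) := by
          rw [← tendsto_iff_norm_sub_tendsto_zero]; exact hφtend
        simpa using this.const_mul |t|
      simpa using hnorm_tend.add h2
    exact hH.mem_of_tendsto key (Filter.Eventually.of_forall fun k =>
      AddSubgroup.zsmul_mem H (hmem (φ k)) _)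
  obtain ⟨t, ht⟩ := hline u₀ hu₀ne
  exact ht (hline' t)

/-- L2: cocompact quotient implies full real span. -/
theorem span_top_of_compactSpace (Λ : AddSubgroup E)
    (hcomp : CompactSpace (E ⧸ Λ)) : span ℝ (Λ : Set E) = ⊤ := by
  by_contra hne
  set p : Submodule ℝ E := span ℝ (Λ : Set E) with hp
  haveI : Nontrivial (E ⧸ p) :=
    Submodule.Quotient.nontrivial_iff (p := p) |>.2 hne
  have hpos : 0 < finrank ℝ (E ⧸ p) := finrank_pos
  set b := finBasis ℝ (E ⧸ p)
  have hidx : Nonempty (Fin (finrank ℝ (E ⧸ p))) := ⟨⟨0, hpos⟩⟩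
  obtain ⟨i⟩ := hidx
  set g : (E ⧸ p) →ₗ[ℝ] ℝ := b.coord i
  set f : E →ₗ[ℝ] ℝ := g ∘ₗ p.mkQ with hf
  have hfΛ : ∀ y ∈ Λ, f y = 0 := by
    intro y hy
    have : (y : E) ∈ p := subset_span hy
    simp [hf, (Submodule.Quotient.mk_eq_zero p).2 this]
  -- lift to the quotient
  set F : E ⧸ Λ → ℝ := ⇑(QuotientAddGroup.lift Λ f.toAddMonoidHom (by
    intro y hy; simpa using hfΛ y hy))
  have hFmk : ∀ y : E, F (QuotientAddGroup.mk y) = f y := fun y => rfl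
  have hFcont : Continuous F := by
    rw [(QuotientAddGroup.isQuotientMap_mk Λ).continuous_iff]
    exact f.continuous_of_finiteDimensional
  have hcomp' : IsCompact (Set.range F) := isCompact_range hFcont
  -- F is surjective
  obtain ⟨e, he⟩ := Submodule.Quotient.mk_surjective p (b i)
  have hfe : f e = 1 := by
    simp only [hf, LinearMap.comp_apply, Submodule.mkQ_apply]
    rw [he]
    simp [g, Basis.coord_apply]
  have hsurj : Set.range F = Set.univ := by
    refine Set.eq_univ_of_forall fun y => ?_
    refine ⟨QuotientAddGroup.mk (y • e), ?_⟩
    rw [hFmk, map_smul, hfe, smul_eq_mul, mul_one]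
  rw [hsurj] at hcomp'
  exact noncompact_univ ℝ hcomp'

/-- L4: density in the quotient versus density in the ambient space. -/
theorem dense_quot_iff (Λ : AddSubgroup E) (x : E) :
    Dense (Set.range fun m : ℤ => (QuotientAddGroup.mk (m • x) : E ⧸ Λ)) ↔
      Dense ((AddSubgroup.zmultiples x ⊔ Λ : AddSubgroup E) : Set E) := by
  have h1 : (Set.range fun m : ℤ => (QuotientAddGroup.mk (m • x) : E ⧸ Λ)) =
      (QuotientAddGroup.mk : E → E ⧸ Λ) '' (Set.range fun m : ℤ => m • x) := by
    rw [← Set.range_comp]; rfl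
  rw [h1, QuotientAddGroup.dense_image_mk]
  have h2 : (Set.range fun m : ℤ => m • x) + (Λ : Set E) =
      ((AddSubgroup.zmultiples x ⊔ Λ : AddSubgroup E) : Set E) := by
    ext y
    simp only [Set.mem_add, Set.mem_range, SetLike.mem_coe, AddSubgroup.mem_sup]
    constructor
    · rintro ⟨_, ⟨m, rfl⟩, z, hz, rfl⟩
      exact ⟨m • x, AddSubgroup.mem_zmultiples_iff.2 ⟨m, rfl⟩, z, hz, rfl⟩
    · rintro ⟨a, ha, z, hz, rfl⟩
      obtain ⟨m, rfl⟩ := AddSubgroup.mem_zmultiples_iff.1 ha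
      exact ⟨m • x, ⟨m, rfl⟩, z, hz, rfl⟩
  rw [h2]

/-- L-rank: the ℤ-rank of a discrete subgroup equals the dimension of its real span. -/
theorem zrank_eq_finrank_span (N : Submodule ℤ E) [hN : DiscreteTopology N] :
    finrank ℤ N = finrank ℝ (span ℝ (N : Set E)) := by
  set W : Submodule ℝ E := span ℝ (N : Set E) with hW
  set L₀ : Submodule ℤ W := ZLattice.comap ℝ N W.subtype with hL₀
  haveI : DiscreteTopology L₀ :=
    ZLattice.comap_discreteTopology ℝ N continuous_subtype_val (injective_subtype _)
  have himg : W.subtype '' (L₀ : Set W) = (N : Set E) := by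
    rw [hL₀, ZLattice.coe_comap]
    ext y
    constructor
    · rintro ⟨z, hz, rfl⟩; exact hz
    · intro hy
      exact ⟨⟨y, subset_span hy⟩, hy, rfl⟩
  haveI : IsZLattice ℝ L₀ := by
    constructor
    rw [← (Submodule.map_injective_of_injective (injective_subtype W)).eq_iff,
      Submodule.map_span, himg, Submodule.map_top, range_subtype]
  have h1 : finrank ℤ L₀ = finrank ℝ W := ZLattice.rank ℝ L₀
  have h2 : finrank ℤ L₀ = finrank ℤ N := by
    have hle : N ≤ W.restrictScalars ℤ := fun y hy => subset_span hy
    have e : Submodule.comap (W.restrictScalars ℤ).subtype N ≃ₗ[ℤ] N :=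
      Submodule.comapSubtypeEquivOfLe hle
    exact (LinearEquiv.finrank_eq e : _)
  rw [← h2, h1]

/-- Discreteness descends to smaller subgroups. -/
theorem discrete_of_le {A B : AddSubgroup E} (h : A ≤ B) [hB : DiscreteTopology B] :
    DiscreteTopology A := by
  have h1 : DiscreteTopology ((B : Set E) : Type _) := hB
  exact DiscreteTopology.of_subset h1 h

/-- finrank of an AddSubgroup agrees with that of the corresponding ℤ-submodule. -/
theorem finrank_toIntSubmodule (A : AddSubgroup E) :
    finrank ℤ (AddSubgroup.toIntSubmodule A) = finrank ℤ A := by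
  have e : (AddSubgroup.toIntSubmodule A : Type _) ≃+ A :=
    { toFun := fun x => ⟨x.1, x.2⟩
      invFun := fun x => ⟨x.1, x.2⟩
      left_inv := fun x => rfl
      right_inv := fun x => rfl
      map_add' := fun x y => rfl }
  exact LinearEquiv.finrank_eq e.toIntLinearEquiv

set_option maxHeartbeats 1000000 in
/-- From a nonzero functional integer-valued on `Λ` and `x`, produce the rational relation. -/
theorem rel_of_functional (Λ : AddSubgroup E) (hdisc : DiscreteTopology Λ)
    (hspan : span ℝ (Λ : Set E) = ⊤) (x : E) (f : E →ₗ[ℝ] ℝ) (hf0 : f ≠ 0)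
    (hfΛ : ∀ y ∈ Λ, ∃ k : ℤ, f y = k) (hfx : ∃ k : ℤ, f x = k) :
    ∃ (r : ℤ) (l : E) (Λ₁ : AddSubgroup E), r ≠ 0 ∧ l ∈ Λ ∧ Λ₁ ≤ Λ ∧
      finrank ℤ Λ₁ < finrank ℝ E ∧ r • x + l ∈ span ℝ (Λ₁ : Set E) := by
  classical
  obtain ⟨a, ha⟩ := hfx
  -- the subgroup of integer values of f on Λ
  set A : AddSubgroup ℤ := AddSubgroup.comap (Int.castAddHom ℝ) (Λ.map f.toAddMonoidHom)
    with hA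
  have hmemA : ∀ k : ℤ, k ∈ A ↔ ∃ y ∈ Λ, f y = (k : ℝ) := by
    intro k
    simp only [hA, AddSubgroup.mem_comap, AddSubgroup.mem_map, Int.coe_castAddHom]
    constructor
    · rintro ⟨y, hy, hfy⟩; exact ⟨y, hy, hfy⟩
    · rintro ⟨y, hy, hfy⟩; exact ⟨y, hy, hfy⟩
  obtain ⟨c, hc⟩ := Int.subgroup_cyclic A
  rw [← AddSubgroup.zmultiples_eq_closure] at hc
  -- c ≠ 0
  have hΛval : ∃ y ∈ Λ, f y ≠ 0 := by
    by_contra hcon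
    push_neg at hcon
    apply hf0
    have : span ℝ (Λ : Set E) ≤ LinearMap.ker f := by
      rw [span_le]
      intro y hy
      simp only [SetLike.mem_coe, LinearMap.mem_ker]
      exact hcon y hy
    rw [hspan, top_le_iff] at this
    exact LinearMap.ker_eq_top.1 this
  have hcne : c ≠ 0 := by
    rintro rfl
    obtain ⟨y, hy, hfy⟩ := hΛval
    obtain ⟨k, hk⟩ := hfΛ y hy
    have : k ∈ A := (hmemA k).2 ⟨y, hy, hk⟩
    rw [hc] at this
    obtain ⟨m, hm⟩ := AddSubgroup.mem_zmultiples_iff.1 this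
    simp only [smul_zero] at hm
    rw [← hm] at hk
    exact hfy (by simpa using hk)
  -- λ₀ with f λ₀ = c
  have hcA : c ∈ A := by rw [hc]; exact AddSubgroup.mem_zmultiples c
  obtain ⟨lam0, hlam0Λ, hflam0⟩ := (hmemA c).1 hcA
  -- the candidate data
  set l : E := (-a) • lam0 with hl
  have hlΛ : l ∈ Λ := AddSubgroup.zsmul_mem Λ hlam0Λ (-a)
  set K : Submodule ℝ E := LinearMap.ker f with hK
  set Λ₁ : AddSubgroup E := Λ ⊓ K.toAddSubgroup with hΛ₁
  have hΛ₁le : Λ₁ ≤ Λ := inf_le_left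
  set N₁ : Submodule ℤ E := AddSubgroup.toIntSubmodule Λ₁ with hN₁
  have hN₁coe : (N₁ : Set E) = (Λ₁ : Set E) := AddSubgroup.coe_toIntSubmodule Λ₁
  haveI hdΛ₁ : DiscreteTopology Λ₁ := discrete_of_le hΛ₁le
  haveI hdN₁ : DiscreteTopology N₁ := hdΛ₁
  -- y ∈ ker f
  have hyK : (c • x + l : E) ∈ K := by
    simp only [hK, LinearMap.mem_ker, map_add, map_zsmul, hl, ha, hflam0]
    simp only [zsmul_eq_mul]
    push_cast
    ring
  -- K is a proper subspace
  have hKlt : K < ⊤ := lt_top_iff_ne_top.2 (fun h => hf0 (LinearMap.ker_eq_top.1 h))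
  -- span of Λ₁ is inside K
  have hspan₁ : span ℝ (N₁ : Set E) ≤ K := by
    rw [span_le, hN₁coe]
    rintro y ⟨_, hy2⟩
    exact hy2
  -- rank bound
  have hrank1 : finrank ℤ N₁ = finrank ℝ (span ℝ (N₁ : Set E)) := zrank_eq_finrank_span N₁
  have hrankΛ₁lt : finrank ℤ Λ₁ < finrank ℝ E := by
    rw [← finrank_toIntSubmodule, hrank1]
    exact lt_of_le_of_lt (Submodule.finrank_mono hspan₁) (Submodule.finrank_lt hKlt.ne)
  -- now prove span ℝ Λ₁ = K via the splitting Λ ≃ Λ₁ × ℤ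
  set L : Submodule ℤ E := AddSubgroup.toIntSubmodule Λ with hLdef
  have hLcoe : (L : Set E) = (Λ : Set E) := AddSubgroup.coe_toIntSubmodule Λ
  haveI hdL : DiscreteTopology L := hdisc
  haveI : IsZLattice ℝ L := ⟨by rw [hLcoe, hspan]⟩
  have hrankL : finrank ℤ L = finrank ℝ E := ZLattice.rank ℝ L
  -- the splitting map
  set Φ : (N₁ × ℤ) →ₗ[ℤ] L :=
    { toFun := fun p => ⟨(p.1 : E) + p.2 • lam0, by
        refine L.add_mem ?_ ?_
        · exact hΛ₁le (p.1.2 : (p.1 : E) ∈ Λ₁)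
        · exact AddSubgroup.zsmul_mem Λ hlam0Λ p.2⟩
      map_add' := fun p q => by
        ext
        simp only [Prod.fst_add, Prod.snd_add, Submodule.coe_add, AddSubmonoid.coe_add]
        push_cast
        rw [add_zsmul]
        abel
      map_smul' := fun m p => by
        ext
        simp only [Prod.smul_fst, Prod.smul_snd, RingHom.id_apply, SetLike.val_smul,
          smul_eq_mul, mul_zsmul, smul_add] } with hΦ
  have hΦinj : Function.Injective Φ := by
    rw [injective_iff_map_eq_zero]
    rintro ⟨⟨v, hv⟩, m⟩ h0
    have h0' : (v : E) + m • lam0 = 0 := by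
      have := congrArg (Subtype.val) h0
      simpa [hΦ] using this
    have hfv : f v = 0 := hv.2
    have : f ((v : E) + m • lam0) = 0 := by rw [h0']; simp
    rw [map_add, hfv, zero_add, map_zsmul, hflam0] at this
    have hm : m = 0 := by
      have : (m : ℝ) * c = 0 := by rw [← this]; simp [zsmul_eq_mul]
      rcases mul_eq_zero.1 this with h | h
      · exact_mod_cast h
      · exact absurd (by exact_mod_cast h) hcne
    subst hm
    simp only [zero_zsmul, add_zero] at h0'
    ext
    · simp [h0']
    · rfl
  have hΦsurj : Function.Surjective Φ := by
    rintro ⟨y, hy⟩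
    obtain ⟨k, hk⟩ := hfΛ y hy
    have hkA : k ∈ A := (hmemA k).2 ⟨y, hy, hk⟩
    rw [hc] at hkA
    obtain ⟨m, hm⟩ := AddSubgroup.mem_zmultiples_iff.1 hkA
    have hyΛ₁ : y - m • lam0 ∈ Λ₁ := by
      refine ⟨Λ.sub_mem hy (AddSubgroup.zsmul_mem Λ hlam0Λ m), ?_⟩
      show f (y - m • lam0) = 0
      rw [map_sub, map_zsmul, hk, hflam0, ← hm]
      push_cast [smul_eq_mul, zsmul_eq_mul]
      ring
    refine ⟨⟨⟨y - m • lam0, hyΛ₁⟩, m⟩, ?_⟩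
    ext
    simp only [hΦ, LinearMap.coe_mk, AddHom.coe_mk]
    abel
  have hequiv : finrank ℤ (N₁ × ℤ) = finrank ℤ L :=
    (LinearEquiv.ofBijective Φ ⟨hΦinj, hΦsurj⟩).finrank_eq
  haveI : Module.Finite ℤ N₁ := inferInstance
  have hprod : finrank ℤ (N₁ × ℤ) = finrank ℤ N₁ + 1 := by
    rw [Module.finrank_prod, finrank_self]
  -- finrank of K
  have hrangef : finrank ℝ (LinearMap.range f) = 1 := by
    have h1 : finrank ℝ (LinearMap.range f) ≤ 1 := by
      have := Submodule.finrank_le (LinearMap.range f)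
      simpa [finrank_self] using this
    have h2 : 1 ≤ finrank ℝ (LinearMap.range f) := by
      have : LinearMap.range f ≠ ⊥ := by
        rw [ne_eq, LinearMap.range_eq_bot]
        exact hf0
      haveI : Nontrivial (LinearMap.range f) :=
        Submodule.nontrivial_iff_ne_bot.2 this
      exact finrank_pos
    omega
  have hfrK : finrank ℝ K + 1 = finrank ℝ E := by
    have h5 := LinearMap.finrank_range_add_finrank_ker f
    rw [hrangef, ← hK] at h5
    omega
  -- span ℝ Λ₁ = K
  have hspaneq : span ℝ (N₁ : Set E) = K := by
    apply Submodule.eq_of_le_of_finrank_le hspan₁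
    have e1 : finrank ℤ N₁ + 1 = finrank ℝ E := by rw [← hprod, hequiv, hrankL]
    rw [← hrank1]
    omega
  refine ⟨c, l, Λ₁, hcne, hlΛ, hΛ₁le, hrankΛ₁lt, ?_⟩
  rw [← hN₁coe, hspaneq]
  exact hyK

/-- A norm-separated subgroup is discrete. -/
theorem discrete_of_sep {F : Type*} [SeminormedAddCommGroup F] (L : AddSubgroup F)
    {ε : ℝ} (hε : 0 < ε) (hsep : ∀ v ∈ L, ‖v‖ < ε → v = 0) : DiscreteTopology L := by
  rw [discreteTopology_iff_isOpen_singleton]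
  intro ⟨v, hv⟩
  have : ({(⟨v, hv⟩ : L)} : Set L) = Subtype.val ⁻¹' Metric.ball v ε := by
    ext ⟨w, hw⟩
    simp only [Set.mem_singleton_iff, Set.mem_preimage, Metric.mem_ball, Subtype.mk.injEq]
    constructor
    · rintro rfl; simpa using hε
    · intro hdist
      have : w - v ∈ L := L.sub_mem hw hv
      have := hsep _ this (by simpa [dist_eq_norm] using hdist)
      have := sub_eq_zero.1 this
      simp [this]
  rw [this]
  exact continuous_subtype_val.isOpen_preimage _ Metric.isOpen_ball

/-- The quotient map onto a normed quotient is an open map. -/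
theorem isOpenMap_quotient_mk (V : Submodule ℝ E) :
    IsOpenMap (fun y : E => (Submodule.Quotient.mk y : E ⧸ V)) := by
  intro U hU
  rw [isOpen_iff_mem_nhds]
  rintro z ⟨y, hyU, rfl⟩
  obtain ⟨r, hr, hball⟩ := Metric.isOpen_iff.1 hU y hyU
  rw [Metric.mem_nhds_iff]
  refine ⟨r, hr, fun w hw => ?_⟩
  rw [Metric.mem_ball, dist_eq_norm] at hw
  obtain ⟨d, hd, hdn⟩ := Submodule.Quotient.norm_mk_lt (w - Submodule.Quotient.mk y)
    (ε := r - ‖w - Submodule.Quotient.mk y‖) (by linarith)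
  refine ⟨y + d, hball ?_, ?_⟩
  · rw [Metric.mem_ball, dist_eq_norm]
    simpa using lt_of_lt_of_le hdn (by linarith)
  · show Submodule.Quotient.mk (y + d) = w
    rw [Submodule.Quotient.mk_add, hd]
    abel

set_option maxHeartbeats 1000000 in
/-- Backward core: if the subgroup generated by `x` and `Λ` is not dense, there is a nonzero
functional that is integer-valued on `Λ` and on `x`. -/
theorem exists_functional_of_not_dense (Λ : AddSubgroup E)
    (hspan : span ℝ (Λ : Set E) = ⊤) (x : E)
    (hnd : ¬ Dense ((AddSubgroup.zmultiples x ⊔ Λ : AddSubgroup E) : Set E)) :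
    ∃ f : E →ₗ[ℝ] ℝ, f ≠ 0 ∧ (∀ y ∈ Λ, ∃ k : ℤ, f y = k) ∧ (∃ k : ℤ, f x = k) := by
  classical
  set S : AddSubgroup E := AddSubgroup.zmultiples x ⊔ Λ with hS
  set H : AddSubgroup E := S.topologicalClosure with hH
  have hHc : IsClosed (H : Set E) := S.isClosed_topologicalClosure
  have hHne : (H : Set E) ≠ Set.univ := by
    intro heq
    apply hnd
    rw [dense_iff_closure_eq]
    rw [hH] at heq
    rw [← AddSubgroup.topologicalClosure_coe, heq]
  -- the maximal linear subspace contained in H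
  set V : Submodule ℝ E :=
    { carrier := {v : E | ∀ t : ℝ, t • v ∈ H}
      add_mem' := fun ha hb t => by
        simpa [smul_add] using H.add_mem (ha t) (hb t)
      zero_mem' := fun t => by simpa using H.zero_mem
      smul_mem' := fun c v hv t => by simpa [smul_smul] using hv (t * c) } with hV
  have hVH : ∀ v ∈ V, v ∈ H := fun v hv => by simpa using hv 1
  have hVne : V ≠ ⊤ := by
    intro heq
    apply hHne
    rw [Set.eq_univ_iff_forall]
    exact fun v => hVH v (heq ▸ trivial)
  haveI : IsClosed (V : Set E) := Submodule.closed_of_finiteDimensional V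
  haveI : Nontrivial (E ⧸ V) :=
    Submodule.Quotient.nontrivial_iff (p := V) |>.2 hVne
  set π : E →ₗ[ℝ] E ⧸ V := V.mkQ with hπ
  set H' : AddSubgroup (E ⧸ V) := H.map π.toAddMonoidHom with hH'
  have hπim : ∀ y : E, π y ∈ H' ↔ y ∈ H := by
    intro y
    constructor
    · rintro ⟨h, hh, hhy⟩
      have : y - h ∈ V := by
        rw [← Submodule.Quotient.eq]
        exact (hhy : Submodule.Quotient.mk h = Submodule.Quotient.mk y).symm
      have : y - h ∈ H := hVH _ this
      simpa using H.add_mem hh this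
    · intro hy; exact ⟨y, hy, rfl⟩
  have hH'c : IsClosed (H' : Set (E ⧸ V)) := by
    have hcompl : (H' : Set (E ⧸ V))ᶜ = (fun y : E => (Submodule.Quotient.mk y : E ⧸ V)) ''
        ((H : Set E)ᶜ) := by
      ext z
      obtain ⟨y, rfl⟩ := Submodule.Quotient.mk_surjective V z
      constructor
      · intro hz
        exact ⟨y, fun hy => hz ((hπim y).2 hy), rfl⟩
      · rintro ⟨w, hw, hwz⟩
        intro hz
        rw [← hwz] at hz
        exact hw ((hπim w).1 hz)
    rw [← isOpen_compl_iff, hcompl]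
    exact isOpenMap_quotient_mk V _ (isOpen_compl_iff.2 hHc)
  have hline : ∀ u : E ⧸ V, u ≠ 0 → ∃ t : ℝ, t • u ∉ H' := by
    intro u hu
    by_contra hcon
    push_neg at hcon
    obtain ⟨y, rfl⟩ := Submodule.Quotient.mk_surjective V u
    apply hu
    rw [Submodule.Quotient.mk_eq_zero]
    intro t
    have := hcon t
    rw [show t • (Submodule.Quotient.mk y : E ⧸ V) = π (t • y) by simp [hπ]] at this
    exact (hπim _).1 this
  obtain ⟨ε, hε, hsep⟩ := exists_eps_of_no_line H' hH'c hline
  haveI hdT : DiscreteTopology H' := discrete_of_sep H' hε hsep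
  -- move to the ℤ-submodule world
  set L' : Submodule ℤ (E ⧸ V) := AddSubgroup.toIntSubmodule H' with hL'
  haveI : DiscreteTopology L' := hdT
  haveI : IsZLattice ℝ L' := by
    constructor
    have h1 : span ℝ (Λ.map π.toAddMonoidHom : Set (E ⧸ V)) = ⊤ := by
      have : (Λ.map π.toAddMonoidHom : Set (E ⧸ V)) = π '' (Λ : Set E) := rfl
      rw [this, ← Submodule.map_span, hspan, Submodule.map_top, range_mkQ]
    rw [eq_top_iff, ← h1]
    apply Submodule.span_mono
    intro z hz
    obtain ⟨y, hy, rfl⟩ := hz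
    exact (hπim y).2 (S.le_topologicalClosure (le_sup_right (α := AddSubgroup E) hy))
  set b := Module.Free.chooseBasis ℤ L' with hb
  set B := b.ofZLatticeBasis ℝ L' with hB
  haveI : Nonempty (Module.Free.ChooseBasisIndex ℤ L') := B.index_nonempty
  obtain ⟨i₀⟩ := (inferInstance : Nonempty (Module.Free.ChooseBasisIndex ℤ L'))
  set f : E →ₗ[ℝ] ℝ := B.coord i₀ ∘ₗ π with hf
  have hfint : ∀ y ∈ H, ∃ k : ℤ, f y = k := by
    intro y hy
    have hmem : π y ∈ L' := (hπim y).2 hy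
    set w : L' := ⟨π y, hmem⟩ with hw
    refine ⟨b.repr w i₀, ?_⟩
    have h2 := Basis.ofZLatticeBasis_repr_apply ℝ L' b w i₀
    simp only [hf, LinearMap.comp_apply, Basis.coord_apply]
    rw [← hB] at h2
    have hcoe : (w : E ⧸ V) = π y := rfl
    rw [← hcoe]
    exact_mod_cast h2
  have hfne : f ≠ 0 := by
    obtain ⟨e, he⟩ := Submodule.Quotient.mk_surjective V (B i₀)
    intro h0
    have : f e = 1 := by
      simp only [hf, LinearMap.comp_apply, Basis.coord_apply]
      rw [show π e = B i₀ from he]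
      simp
    rw [h0] at this
    simp at this
  have hxH : x ∈ H := S.le_topologicalClosure
    (le_sup_left (α := AddSubgroup E) (AddSubgroup.mem_zmultiples x))
  exact ⟨f, hfne, fun y hy => hfint y
    (S.le_topologicalClosure (le_sup_right (α := AddSubgroup E) hy)), hfint x hxH⟩

set_option maxHeartbeats 1000000 in
/-- Forward core: a rational relation prevents density. -/
theorem not_dense_of_rel (Λ : AddSubgroup E) (hdisc : DiscreteTopology Λ)
    (hspan : span ℝ (Λ : Set E) = ⊤) (x : E) (r : ℤ) (l : E) (Λ₁ : AddSubgroup E)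
    (hr : r ≠ 0) (hl : l ∈ Λ) (hle : Λ₁ ≤ Λ) (hrank : finrank ℤ Λ₁ < finrank ℝ E)
    (hmem : r • x + l ∈ span ℝ (Λ₁ : Set E)) :
    ¬ Dense ((AddSubgroup.zmultiples x ⊔ Λ : AddSubgroup E) : Set E) := by
  classical
  set N₁ : Submodule ℤ E := AddSubgroup.toIntSubmodule Λ₁ with hN₁
  have hN₁coe : (N₁ : Set E) = (Λ₁ : Set E) := AddSubgroup.coe_toIntSubmodule Λ₁
  haveI hdΛ₁ : DiscreteTopology Λ₁ := discrete_of_le hle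
  haveI hdN₁ : DiscreteTopology N₁ := hdΛ₁
  set W : Submodule ℝ E := span ℝ (Λ₁ : Set E) with hW
  have hWrank : finrank ℝ W < finrank ℝ E := by
    rw [hW, ← hN₁coe, ← zrank_eq_finrank_span, hN₁, finrank_toIntSubmodule]
    exact hrank
  set L : Submodule ℤ E := AddSubgroup.toIntSubmodule Λ with hLdef
  have hLcoe : (L : Set E) = (Λ : Set E) := AddSubgroup.coe_toIntSubmodule Λ
  haveI hdL : DiscreteTopology L := hdisc
  haveI : IsZLattice ℝ L := ⟨by rw [hLcoe, hspan]⟩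
  -- the subgroup of lattice points lying in W
  set G : Submodule ℤ L := (W.restrictScalars ℤ).comap L.subtype with hG
  have hGmem : ∀ v : L, v ∈ G ↔ (v : E) ∈ W := fun v => Iff.rfl
  set Q := L ⧸ G with hQ
  haveI : NoZeroSMulDivisors ℤ Q := by
    constructor
    intro m q hmq
    by_cases hm : m = 0
    · exact Or.inl hm
    · refine Or.inr ?_
      obtain ⟨v, rfl⟩ := Submodule.Quotient.mk_surjective G q
      have hmq' : (m • v : L) ∈ G := by
        rw [← Submodule.Quotient.mk_eq_zero, ← Submodule.mkQ_apply, map_smul]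
        exact hmq
      rw [hGmem] at hmq'
      rw [Submodule.Quotient.mk_eq_zero, hGmem]
      have hcoe : ((m • v : L) : E) = (m : ℝ) • (v : E) := by
        rw [Int.cast_smul_eq_zsmul]
        rfl
      rw [hcoe] at hmq'
      have := W.smul_mem ((m : ℝ)⁻¹) hmq'
      rwa [smul_smul, inv_mul_cancel₀ (by exact_mod_cast hm), one_smul] at this
  haveI : Nontrivial Q := by
    by_contra hcon
    rw [not_nontrivial_iff_subsingleton] at hcon
    have hsub : (Λ : Set E) ⊆ (W : Set E) := by
      intro y hy
      have h0 : (Submodule.Quotient.mk (⟨y, hy⟩ : L) : Q) = 0 := Subsingleton.elim _ _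
      rw [Submodule.Quotient.mk_eq_zero] at h0
      exact (hGmem _).1 h0
    have : (⊤ : Submodule ℝ E) ≤ W := by
      rw [← hspan]
      exact span_le.2 hsub
    have : finrank ℝ W = finrank ℝ E :=
      le_antisymm (Submodule.finrank_le W) (by
        calc finrank ℝ E = finrank ℝ (⊤ : Submodule ℝ E) := finrank_top ℝ E |>.symm
          _ ≤ finrank ℝ W := Submodule.finrank_mono this)
    omega
  haveI : Module.Free ℤ Q := Module.free_of_finite_type_torsion_free'
  set bQ := Module.Free.chooseBasis ℤ Q with hbQ
  haveI : Nonempty (Module.Free.ChooseBasisIndex ℤ Q) := bQ.index_nonempty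
  obtain ⟨j⟩ := (inferInstance : Nonempty (Module.Free.ChooseBasisIndex ℤ Q))
  set φ : L →ₗ[ℤ] ℤ := bQ.coord j ∘ₗ G.mkQ with hφ
  have hφG : ∀ v : L, v ∈ G → φ v = 0 := by
    intro v hv
    simp only [hφ, LinearMap.comp_apply, Basis.coord_apply]
    rw [show G.mkQ v = 0 from (Submodule.Quotient.mk_eq_zero G).2 hv]
    simp
  have hφne : ∃ v : L, φ v = 1 := by
    obtain ⟨v, hv⟩ := Submodule.Quotient.mk_surjective G (bQ j)
    refine ⟨v, ?_⟩
    simp only [hφ, LinearMap.comp_apply, Basis.coord_apply]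
    rw [show G.mkQ v = bQ j from hv]
    simp
  -- extend φ to an ℝ-linear functional
  set b := Module.Free.chooseBasis ℤ L with hb
  set B := b.ofZLatticeBasis ℝ L with hB
  set f : E →ₗ[ℝ] ℝ := B.constr ℝ (fun i => ((φ (b i) : ℤ) : ℝ)) with hf
  have hagree : ∀ w : L, f w = ((φ w : ℤ) : ℝ) := by
    intro w
    rw [hf, Basis.constr_apply_fintype]
    have hrepr : ∀ i, B.equivFun (w : E) i = ((b.repr w i : ℤ) : ℝ) := by
      intro i
      rw [Basis.equivFun_apply, hB, Basis.ofZLatticeBasis_repr_apply ℝ L b w i]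
    calc ∑ i, B.equivFun (w : E) i • ((φ (b i) : ℤ) : ℝ)
        = ∑ i, (((b.repr w i * φ (b i) : ℤ) : ℤ) : ℝ) := by
          refine Finset.sum_congr rfl fun i _ => ?_
          rw [hrepr i, smul_eq_mul]
          push_cast
          ring
      _ = ((∑ i, b.repr w i * φ (b i) : ℤ) : ℝ) := by push_cast; ring
      _ = ((φ w : ℤ) : ℝ) := by
          congr 1
          have hw : w = ∑ i, b.repr w i • b i := (b.sum_repr w).symm
          conv_rhs => rw [hw]
          rw [map_sum]
          refine (Finset.sum_congr rfl fun i _ => ?_).symm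
          rw [map_zsmul, smul_eq_mul]
  have hfΛ : ∀ y ∈ Λ, ∃ k : ℤ, f y = k := fun y hy => ⟨φ ⟨y, hy⟩, hagree ⟨y, hy⟩⟩
  have hfW : ∀ w ∈ W, f w = 0 := by
    have hWker : W ≤ LinearMap.ker f := by
      rw [hW, span_le]
      intro y hy
      have hyΛ : y ∈ Λ := hle hy
      have hyG : (⟨y, hyΛ⟩ : L) ∈ G := by
        rw [hGmem]
        exact subset_span hy
      simp only [SetLike.mem_coe, LinearMap.mem_ker]
      rw [show y = ((⟨y, hyΛ⟩ : L) : E) from rfl, hagree, hφG _ hyG]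
      simp
    intro w hw
    exact LinearMap.mem_ker.1 (hWker hw)
  -- the closed proper set containing the subgroup
  obtain ⟨kl, hkl⟩ := hfΛ l hl
  have hfrx : f (r • x) = -kl := by
    have h0 : f (r • x + l) = 0 := hfW _ hmem
    rw [map_add, hkl] at h0
    linarith
  set C : Set E := (fun y => (r : ℝ) * f y) ⁻¹' (Set.range ((↑) : ℤ → ℝ)) with hC
  have hCclosed : IsClosed C := by
    apply IsClosed.preimage
    · exact (continuous_const.mul f.continuous_of_finiteDimensional)
    · exact Int.isClosedEmbedding_coe_real.isClosed_range
  have hSC : ((AddSubgroup.zmultiples x ⊔ Λ : AddSubgroup E) : Set E) ⊆ C := by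
    intro s hs
    obtain ⟨y, hy, z, hz, rfl⟩ := AddSubgroup.mem_sup.1 hs
    obtain ⟨m, rfl⟩ := AddSubgroup.mem_zmultiples_iff.1 hy
    obtain ⟨kz, hkz⟩ := hfΛ z hz
    have h1 : f (m • x) = (m : ℝ) * f x := by rw [map_zsmul, zsmul_eq_mul]
    have h2 : (r : ℝ) * f x = -kl := by
      rw [← hfrx, map_zsmul, zsmul_eq_mul]
    refine ⟨m * (-kl) + r * kz, ?_⟩
    show ((m * (-kl) + r * kz : ℤ) : ℝ) = (r : ℝ) * f (m • x + z)
    calc ((m * (-kl) + r * kz : ℤ) : ℝ)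
        = (m : ℝ) * (-(kl:ℝ)) + (r:ℝ) * kz := by push_cast; ring
      _ = (m : ℝ) * ((r : ℝ) * f x) + (r:ℝ) * kz := by rw [h2]
      _ = (r : ℝ) * f (m • x + z) := by rw [map_add, h1, hkz]; ring
  intro hdense
  -- C is closed and dense, hence everything; but f takes value 1/(2r) somewhere
  have hCuniv : C = Set.univ := by
    have hd : Dense C := hdense.mono hSC
    rw [← hCclosed.closure_eq, hd.closure_eq]
  obtain ⟨v, hv1⟩ := hφne
  have hfv : f v = 1 := by rw [hagree, hv1]; simp
  set y : E := ((2 * r : ℝ))⁻¹ • (v : E) with hy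
  have hymem : y ∈ C := by rw [hCuniv]; exact Set.mem_univ y
  have hyC : ((r : ℝ) * f y) ∈ Set.range ((↑) : ℤ → ℝ) := Set.mem_preimage.mp hymem
  obtain ⟨k, hk⟩ := hyC
  have hrne : (r : ℝ) ≠ 0 := Int.cast_ne_zero.2 hr
  have hval : (r : ℝ) * f y = 1 / 2 := by
    rw [hy, map_smul, hfv, smul_eq_mul, mul_one]
    rw [eq_div_iff (two_ne_zero)]
    field_simp
  rw [hval] at hk
  have : (2 * k : ℤ) = (1 : ℤ) := by
    have h2 : ((2 * k : ℤ) : ℝ) = ((1 : ℤ) : ℝ) := by push_cast; linarith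
    exact_mod_cast h2
  omega

end Helpers

set_option maxHeartbeats 1000000 in
/-- Lemma 1(b): for a lattice `Λ` in `ℝⁿ` and `x ∈ ℝⁿ`, the integer multiples of `x` are
dense in `ℝⁿ/Λ` if and only if there is no nonzero integer `r`, element `λ ∈ Λ`, and
subgroup `Λ₁ ≤ Λ` of `ℤ`-rank `< n` such that `r • x + λ` lies in the `ℝ`-linear span
of `Λ₁`. -/
theorem dense_multiples_iff_no_relation (n : ℕ) (Λ : AddSubgroup (Fin n → ℝ))
    (hdisc : DiscreteTopology Λ) (hcomp : CompactSpace ((Fin n → ℝ) ⧸ Λ)) (x : Fin n → ℝ) :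
    Dense (Set.range fun m : ℤ => (QuotientAddGroup.mk (m • x) : (Fin n → ℝ) ⧸ Λ)) ↔
      ¬ ∃ (r : ℤ) (l : Fin n → ℝ) (Λ₁ : AddSubgroup (Fin n → ℝ)), r ≠ 0 ∧ l ∈ Λ ∧ Λ₁ ≤ Λ ∧
        Module.finrank ℤ Λ₁ < n ∧
        r • x + l ∈ Submodule.span ℝ (Λ₁ : Set (Fin n → ℝ)) := by
  have hspan := span_top_of_compactSpace Λ hcomp
  have hn : finrank ℝ (Fin n → ℝ) = n := Module.finrank_fin_fun ℝ
  rw [dense_quot_iff]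
  constructor
  · intro hdense
    rintro ⟨r, l, Λ₁, hr, hl, hle, hrank, hmem⟩
    exact not_dense_of_rel Λ hdisc hspan x r l Λ₁ hr hl hle (by rw [hn]; exact hrank) hmem hdense
  · intro hno
    by_contra hnd
    obtain ⟨f, hf0, hfΛ, hfx⟩ := exists_functional_of_not_dense Λ hspan x hnd
    obtain ⟨r, l, Λ₁, hr, hl, hle, hrank, hmem⟩ :=
      rel_of_functional Λ hdisc hspan x f hf0 hfΛ hfx
    exact hno ⟨r, l, Λ₁, hr, hl, hle, by rwa [hn] at hrank, hmem⟩
end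

section
/- Let Λ be a discrete additive subgroup of ℝⁿ such that the quotient ℝⁿ/Λ is compact, and let x = (x₁,…,xₙ) ∈ ℝⁿ. Then the set of integer multiples {m•x : m ∈ ℤ}, taken modulo Λ, is dense in ℝⁿ/Λ if and only if for every nonzero integer r, every λ = (λ₁,…,λₙ) ∈ Λ, and all vectors ℓ₁,…,ℓ_{n−1} ∈ Λ generating a subgroup of ℤ-rank n−1, the n×n matrix whose first row is r•x + λ and whose remaining n−1 rows are ℓ₁,…,ℓ_{n−1} has nonzero determinant. -/
open Submodule Module Set Filter Topology

section Aux

variable {E : Type*} [NormedAddCommGroup E] [NormedSpace ℝ E] [FiniteDimensional ℝ E]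

/-- The `ℤ`-rank of a discrete subgroup equals the dimension of its real span. -/
theorem aux_finrank_int_eq_finrank_span (L : Submodule ℤ E) [DiscreteTopology L] :
    finrank ℤ L = finrank ℝ (span ℝ (L : Set E)) := by
  set F := span ℝ (L : Set E) with hF
  let f : F →ₗ[ℝ] E := F.subtype
  let L₀ : Submodule ℤ F := L.comap (f.restrictScalars ℤ)
  have h_img : f '' L₀ = L := by
    rw [← LinearMap.coe_restrictScalars ℤ f, ← Submodule.map_coe (f.restrictScalars ℤ),
      Submodule.map_comap_eq_self]
    exact fun x hx ↦ LinearMap.mem_range.mpr ⟨⟨x, Submodule.subset_span hx⟩, rfl⟩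
  have hdisc : DiscreteTopology L₀ := by
    refine DiscreteTopology.preimage_of_continuous_injective (L : Set E) ?_
      (injective_subtype _)
    exact LinearMap.continuous_of_finiteDimensional f
  have hZL : IsZLattice ℝ L₀ := ⟨by
    rw [← (Submodule.map_injective_of_injective (injective_subtype F)).eq_iff,
      Submodule.map_span, Submodule.map_top, range_subtype]
    show span ℝ (f '' L₀) = F
    rw [h_img]⟩
  have h1 : finrank ℤ L₀ = finrank ℝ F := ZLattice.rank ℝ L₀
  have hmap : L₀.map (f.restrictScalars ℤ) = L := SetLike.ext'_iff.mpr h_img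
  have e : L₀ ≃ₗ[ℤ] L :=
    (Submodule.equivMapOfInjective (f.restrictScalars ℤ) (injective_subtype F) L₀).trans
      (LinearEquiv.ofEq _ _ hmap)
  rw [← e.finrank_eq, h1]

/-- A subgroup with compact quotient spans the whole space. -/
theorem aux_span_top_of_compactSpace (Λ : AddSubgroup E) (hc : CompactSpace (E ⧸ Λ)) :
    span ℝ (Λ : Set E) = ⊤ := by
  by_contra h
  obtain ⟨φ, φ0, hker⟩ := (span ℝ (Λ : Set E)).exists_le_ker_of_lt_top (lt_top_iff_ne_top.2 h)
  have hφΛ : ∀ v ∈ Λ, φ v = 0 := fun v hv =>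
    LinearMap.mem_ker.1 (hker (Submodule.subset_span hv))
  let g : E ⧸ Λ → ℝ := QuotientAddGroup.lift Λ φ.toAddMonoidHom (by
    intro v hv; exact hφΛ v hv)
  have hgc : Continuous g := by
    rw [QuotientAddGroup.isQuotientMap_mk Λ |>.continuous_iff]
    exact φ.continuous_of_finiteDimensional
  have hrange : Set.range g = Set.range φ := by
    ext t
    constructor
    · rintro ⟨q, rfl⟩
      obtain ⟨v, rfl⟩ := QuotientAddGroup.mk_surjective q
      exact ⟨v, rfl⟩
    · rintro ⟨v, rfl⟩
      exact ⟨QuotientAddGroup.mk v, rfl⟩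
  have hsurj : Set.range φ = Set.univ := by
    obtain ⟨v, hv⟩ : ∃ v, φ v ≠ 0 := by
      by_contra hno
      push_neg at hno
      exact φ0 (LinearMap.ext fun v => hno v)
    refine Set.eq_univ_of_forall fun t => ⟨(t / φ v) • v, ?_⟩
    simp [div_mul_cancel₀, hv]
  have : IsCompact (Set.range g) := isCompact_range hgc
  rw [hrange, hsurj] at this
  exact this.ne_univ rfl

end Aux



variable {E : Type*} [NormedAddCommGroup E] [NormedSpace ℝ E] [FiniteDimensional ℝ E]

/-- From a proper closed spanning subgroup, produce a nonzero integer-valued functional. -/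
theorem aux_exists_functional (G : AddSubgroup E) (hGc : IsClosed (G : Set E)) (hG : G ≠ ⊤)
    (hspan : span ℝ (G : Set E) = ⊤) :
    ∃ f : E →ₗ[ℝ] ℝ, f ≠ 0 ∧ ∀ g ∈ G, ∃ m : ℤ, f g = m := by
  classical
  -- the largest subspace contained in G
  set V : Submodule ℝ E :=
    { carrier := {v | ∀ t : ℝ, t • v ∈ G}
      add_mem' := fun {a b} ha hb t => by
        simpa [smul_add] using G.add_mem (ha t) (hb t)
      zero_mem' := fun t => by simpa using G.zero_mem
      smul_mem' := fun c v hv t => by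
        simpa [smul_smul] using hv (t * c) } with hVdef
  have hVG : ∀ v ∈ V, v ∈ G := fun v hv => by simpa using hv 1
  obtain ⟨W, hVW⟩ := Submodule.exists_isCompl V
  set LW : Submodule ℤ E := AddSubgroup.toIntSubmodule (G ⊓ W.toAddSubgroup) with hLWdef
  have hLWG : ∀ v ∈ LW, v ∈ G := fun v hv => hv.1
  have hLWW : ∀ v ∈ LW, v ∈ W := fun v hv => hv.2
  -- LW is discrete
  have hdisc : DiscreteTopology LW := by
    rw [discreteTopology_iff_isOpen_singleton_zero]
    by_contra hopen
    have hsmall : ∀ ε : ℝ, 0 < ε → ∃ g : E, g ∈ LW ∧ g ≠ 0 ∧ ‖g‖ < ε := by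
      intro ε hε
      by_contra hno
      push_neg at hno
      apply hopen
      have hset : ({0} : Set LW) = (Subtype.val ⁻¹' Metric.ball (0 : E) ε : Set LW) := by
        ext g
        simp only [Set.mem_singleton_iff, Set.mem_preimage, Metric.mem_ball, dist_zero_right]
        constructor
        · rintro rfl; simpa using hε
        · intro hg
          by_contra hg0
          have : g.1 ≠ 0 := fun h => hg0 (Subtype.ext h)
          exact absurd hg (not_lt.2 (hno g.1 g.2 this))
      rw [hset]
      exact Metric.isOpen_ball.preimage continuous_subtype_val
    choose g hg1 hg2 hg3 using fun k : ℕ => hsmall (1 / (k + 1)) (by positivity)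
    have hgn : ∀ k, ‖g k‖ ≠ 0 := fun k => norm_ne_zero_iff.2 (hg2 k)
    set u : ℕ → E := fun k => ‖g k‖⁻¹ • g k with hu
    have humem : ∀ k, u k ∈ Metric.sphere (0 : E) 1 := by
      intro k
      simp [hu, norm_smul, inv_mul_cancel₀ (hgn k)]
    obtain ⟨c, hcs, φ, hφmono, hφtend⟩ :=
      (isCompact_sphere (0 : E) 1).tendsto_subseq humem
    have hcW : c ∈ W := by
      refine (W.closed_of_finiteDimensional).mem_of_tendsto hφtend
        (Filter.Eventually.of_forall fun k => ?_)
      exact W.smul_mem _ (hLWW _ (hg1 (φ k)))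
    have hgtend : Tendsto (fun k => ‖g (φ k)‖) atTop (𝓝 0) := by
      refine squeeze_zero (fun k => norm_nonneg _) (fun k => (hg3 (φ k)).le) ?_
      have h1 : Tendsto (fun k : ℕ => 1 / ((k : ℝ) + 1)) atTop (𝓝 0) :=
        tendsto_one_div_add_atTop_nhds_zero_nat
      exact h1.comp (hφmono.tendsto_atTop.comp tendsto_id) |>.congr (fun k => rfl)
    have hcV' : ∀ t : ℝ, 0 ≤ t → t • c ∈ G := by
      intro t ht
      have key : Tendsto (fun k => (⌊t / ‖g (φ k)‖⌋ : ℤ) • g (φ k)) atTop (𝓝 (t • c)) := by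
        have heq : ∀ k, (⌊t / ‖g (φ k)‖⌋ : ℤ) • g (φ k)
            = ((⌊t / ‖g (φ k)‖⌋ : ℝ) * ‖g (φ k)‖) • u (φ k) := by
          intro k
          simp only [hu, smul_smul, mul_assoc, mul_inv_cancel₀ (hgn (φ k)), mul_one,
            Int.cast_smul_eq_zsmul]
        rw [show (fun k => (⌊t / ‖g (φ k)‖⌋ : ℤ) • g (φ k))
            = fun k => ((⌊t / ‖g (φ k)‖⌋ : ℝ) * ‖g (φ k)‖) • u (φ k) from funext heq]
        refine Tendsto.smul ?_ hφtend
        have hbound : ∀ k, |(⌊t / ‖g (φ k)‖⌋ : ℝ) * ‖g (φ k)‖ - t| ≤ ‖g (φ k)‖ := by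
          intro k
          have hpos : (0 : ℝ) < ‖g (φ k)‖ :=
            lt_of_le_of_ne (norm_nonneg _) (Ne.symm (hgn (φ k)))
          have h1 : (⌊t / ‖g (φ k)‖⌋ : ℝ) ≤ t / ‖g (φ k)‖ := Int.floor_le _
          have h2 : t / ‖g (φ k)‖ < ⌊t / ‖g (φ k)‖⌋ + 1 := Int.lt_floor_add_one _
          rw [abs_le]
          constructor
          · nlinarith [mul_le_mul_of_nonneg_right h1 hpos.le, (div_mul_cancel₀ t hpos.ne')]
          · nlinarith [mul_le_mul_of_nonneg_right h2.le hpos.le, (div_mul_cancel₀ t hpos.ne')]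
        have hsc : Tendsto (fun k => (⌊t / ‖g (φ k)‖⌋ : ℝ) * ‖g (φ k)‖ - t) atTop (𝓝 0) :=
          squeeze_zero_norm (fun k => by simpa using hbound k) hgtend
        have := hsc.add_const t
        simpa using this
      refine hGc.mem_of_tendsto key (Filter.Eventually.of_forall fun k => ?_)
      exact AddSubgroup.zsmul_mem G (hLWG _ (hg1 (φ k))) _
    have hcV : c ∈ V := by
      intro t
      rcases le_or_gt 0 t with ht | ht
      · exact hcV' t ht
      · have h1 := hcV' (-t) (by linarith)
        have h2 : -((-t) • c) ∈ G := G.neg_mem h1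
        simpa using h2
    have : c ∈ V ⊓ W := ⟨hcV, hcW⟩
    rw [hVW.inf_eq_bot] at this
    rw [this] at hcs
    simp at hcs
  -- W is nontrivial
  have hWne : W ≠ ⊥ := by
    intro hW
    apply hG
    have hV : V = ⊤ := by
      have := hVW.sup_eq_top
      rwa [hW, sup_bot_eq] at this
    ext v
    simp only [AddSubgroup.mem_top, iff_true]
    exact hVG v (hV ▸ Submodule.mem_top)
  -- every element of G decomposes as V + LW
  have hGdec : ∀ g ∈ G, ∃ v ∈ V, ∃ w ∈ LW, g = v + w := by
    intro a ha
    have : a ∈ V ⊔ W := by rw [hVW.sup_eq_top]; exact Submodule.mem_top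
    obtain ⟨v, hv, w, hw, hvw⟩ := Submodule.mem_sup.1 this
    refine ⟨v, hv, w, ⟨?_, hw⟩, hvw.symm⟩
    have : w = a - v := by rw [← hvw]; abel
    rw [this]
    exact G.sub_mem ha (hVG v hv)
  -- LW spans W
  have hspanW : span ℝ (LW : Set E) = W := by
    apply le_antisymm
    · exact span_le.2 fun w hw => hLWW w hw
    · intro w hw
      have hsub : span ℝ (G : Set E) ≤ V ⊔ span ℝ (LW : Set E) := by
        apply span_le.2
        intro a ha
        obtain ⟨v, hv, z, hz, rfl⟩ := hGdec a ha
        exact Submodule.add_mem_sup hv (Submodule.subset_span hz)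
      have hw2 : w ∈ V ⊔ span ℝ (LW : Set E) := hsub (hspan ▸ Submodule.mem_top)
      obtain ⟨v, hv, s, hs, hvs⟩ := Submodule.mem_sup.1 hw2
      have hsW : s ∈ W := span_le.2 (fun z hz => hLWW z hz) hs
      have hvW : v ∈ W := by
        have : v = w - s := by rw [← hvs]; abel
        rw [this]; exact W.sub_mem hw hsW
      have : v ∈ V ⊓ W := ⟨hv, hvW⟩
      rw [hVW.inf_eq_bot] at this
      simp only [Submodule.mem_bot] at this
      rw [← hvs, this, zero_add]
      exact hs
  -- move into W and use the ZLattice machinery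
  let fW : W →ₗ[ℝ] E := W.subtype
  let L₀ : Submodule ℤ W := LW.comap (fW.restrictScalars ℤ)
  have h_img : fW '' L₀ = (LW : Set E) := by
    rw [← LinearMap.coe_restrictScalars ℤ fW, ← Submodule.map_coe (fW.restrictScalars ℤ),
      Submodule.map_comap_eq_self]
    intro x hx
    exact LinearMap.mem_range.mpr ⟨⟨x, hLWW x hx⟩, rfl⟩
  have hdisc₀ : DiscreteTopology L₀ := by
    refine DiscreteTopology.preimage_of_continuous_injective (LW : Set E) ?_
      (injective_subtype _)
    exact LinearMap.continuous_of_finiteDimensional fW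
  have hZL : IsZLattice ℝ L₀ := ⟨by
    rw [← (Submodule.map_injective_of_injective (injective_subtype W)).eq_iff,
      Submodule.map_span, Submodule.map_top, range_subtype]
    show span ℝ (fW '' L₀) = W
    rw [h_img, hspanW]⟩
  have hfin₀ : Module.Finite ℤ L₀ := ZLattice.module_finite ℝ L₀
  have hfree₀ : Module.Free ℤ L₀ := ZLattice.module_free ℝ L₀
  let b := Module.Free.chooseBasis ℤ L₀
  let ι := Module.Free.ChooseBasisIndex ℤ L₀
  have hWnontriv : Nontrivial W := Submodule.nontrivial_iff_ne_bot.2 hWne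
  let bR : Basis ι ℝ W := Basis.ofZLatticeBasis ℝ L₀ b
  have hι : Nonempty ι := bR.index_nonempty
  obtain ⟨i₀⟩ := hι
  let proj : E →ₗ[ℝ] W := W.projectionOnto V hVW.symm
  refine ⟨(bR.coord i₀).comp proj, ?_, ?_⟩
  · intro h0
    have h1 : (bR.coord i₀).comp proj (bR i₀) = 1 := by
      simp only [LinearMap.comp_apply, proj]
      rw [Submodule.projectionOnto_apply_left hVW.symm (bR i₀)]
      simp [Basis.coord_apply]
    rw [h0] at h1
    simpa using h1
  · intro a ha
    obtain ⟨v, hv, w, hw, rfl⟩ := hGdec a ha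
    have hproj : proj (v + w) = ⟨w, hLWW w hw⟩ := by
      have h1 : proj v = 0 := Submodule.projectionOnto_apply_right hVW.symm ⟨v, hv⟩
      have h2 : proj w = ⟨w, hLWW w hw⟩ :=
        Submodule.projectionOnto_apply_left hVW.symm ⟨w, hLWW w hw⟩
      rw [map_add, h1, h2, zero_add]
    refine ⟨b.repr ⟨⟨w, hLWW w hw⟩, hw⟩ i₀, ?_⟩
    simp only [LinearMap.comp_apply, hproj, Basis.coord_apply]
    exact_mod_cast (Basis.ofZLatticeBasis_repr_apply ℝ L₀ b ⟨⟨w, hLWW w hw⟩, hw⟩ i₀)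



-- dot product as a linear functional
noncomputable def dotL {n : ℕ} (y : Fin n → ℝ) : (Fin n → ℝ) →ₗ[ℝ] ℝ where
  toFun v := dotProduct v y
  map_add' a b := add_dotProduct a b y
  map_smul' c a := smul_dotProduct c a y

@[simp] lemma dotL_apply {n : ℕ} (y v : Fin n → ℝ) : dotL y v = dotProduct v y := rfl

lemma dotL_eq_of_single {n : ℕ} (f : (Fin n → ℝ) →ₗ[ℝ] ℝ) (v : Fin n → ℝ) :
    f v = dotProduct v (fun i => f (Pi.single i 1)) := by
  have hv : v = ∑ i, v i • (Pi.single i 1 : Fin n → ℝ) := by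
    funext j
    rw [Finset.sum_apply]
    simp only [Pi.smul_apply, Pi.single_apply, smul_eq_mul, mul_ite, mul_one, mul_zero]
    simp
  conv_lhs => rw [hv]
  rw [map_sum]
  simp only [map_smul, smul_eq_mul]
  rfl

section Part1

variable {n : ℕ} (Λ : AddSubgroup (Fin n → ℝ))

theorem aux_dense_iff_dual [DiscreteTopology Λ] (hcomp : CompactSpace ((Fin n → ℝ) ⧸ Λ))
    (hspanΛ : span ℝ (Λ : Set (Fin n → ℝ)) = ⊤) (x : Fin n → ℝ) :
    Dense (Set.range fun m : ℤ => (QuotientAddGroup.mk (m • x) : (Fin n → ℝ) ⧸ Λ)) ↔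
      ∀ y : Fin n → ℝ, y ≠ 0 → (∀ v ∈ Λ, ∃ m : ℤ, dotProduct v y = m) →
        ¬ ∃ k : ℤ, dotProduct x y = k := by
  classical
  set A : AddSubgroup (Fin n → ℝ) := AddSubgroup.zmultiples x ⊔ Λ with hA
  have hmemA : ∀ v, v ∈ A ↔ ∃ m : ℤ, v - m • x ∈ Λ := by
    intro v
    constructor
    · intro hv
      obtain ⟨a, ha, z, hz, hvz⟩ := AddSubgroup.mem_sup.1 hv
      obtain ⟨m, rfl⟩ := AddSubgroup.mem_zmultiples_iff.1 ha
      exact ⟨m, by rw [← hvz]; simpa using hz⟩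
    · rintro ⟨m, hm⟩
      have : v = m • x + (v - m • x) := by abel
      rw [this]
      exact AddSubgroup.mem_sup.2 ⟨m • x, AddSubgroup.zsmul_mem _ (AddSubgroup.mem_zmultiples x) m,
        v - m • x, hm, rfl⟩
  have hpre : ((QuotientAddGroup.mk : (Fin n → ℝ) → (Fin n → ℝ) ⧸ Λ) ⁻¹'
      (Set.range fun m : ℤ => (QuotientAddGroup.mk (m • x) : (Fin n → ℝ) ⧸ Λ))) = (A : Set _) := by
    ext v
    simp only [Set.mem_preimage, Set.mem_range, SetLike.mem_coe]
    rw [hmemA]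
    constructor
    · rintro ⟨m, hm⟩
      refine ⟨m, ?_⟩
      have := (QuotientAddGroup.eq (s := Λ)).1 hm
      simpa [neg_add_eq_sub] using this
    · rintro ⟨m, hm⟩
      refine ⟨m, ?_⟩
      rw [QuotientAddGroup.eq]
      simpa [neg_add_eq_sub] using hm
  have hdense : Dense (Set.range fun m : ℤ => (QuotientAddGroup.mk (m • x) : (Fin n → ℝ) ⧸ Λ))
      ↔ Dense (A : Set (Fin n → ℝ)) := by
    rw [← QuotientAddGroup.dense_preimage_mk, hpre]
  rw [hdense]
  constructor
  · -- dense → dual condition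
    intro hD y hy0 hint ⟨k, hk⟩
    have hc : Continuous (dotL y) := (dotL y).continuous_of_finiteDimensional
    have hAint : ∀ a ∈ A, ∃ m : ℤ, dotProduct a y = m := by
      intro a ha
      obtain ⟨m, hm⟩ := (hmemA a).1 ha
      obtain ⟨j, hj⟩ := hint _ hm
      refine ⟨j + m * k, ?_⟩
      have h1 : dotProduct a y - dotProduct (m • x) y = j := by
        rw [← sub_dotProduct]; exact hj
      have h2 : dotProduct (m • x) y = (m : ℝ) * dotProduct x y := by
        rw [← Int.cast_smul_eq_zsmul ℝ, smul_dotProduct]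
        rfl
      push_cast
      rw [h2, hk] at h1
      linarith
    have hT : IsClosed (Set.range ((↑) : ℤ → ℝ)) :=
      Int.isClosedEmbedding_coe_real.isClosed_range
    have himg : (dotL y) '' (A : Set (Fin n → ℝ)) ⊆ Set.range ((↑) : ℤ → ℝ) := by
      rintro - ⟨a, ha, rfl⟩
      obtain ⟨m, hm⟩ := hAint a ha
      exact ⟨m, hm.symm⟩
    have hall : ∀ v : Fin n → ℝ, dotL y v ∈ Set.range ((↑) : ℤ → ℝ) := by
      intro v
      have h1 : v ∈ closure (A : Set (Fin n → ℝ)) := hD v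
      have h2 : dotL y v ∈ closure ((dotL y) '' (A : Set (Fin n → ℝ))) := by
        exact (image_closure_subset_closure_image hc) ⟨v, h1, rfl⟩
      exact hT.closure_subset_iff.2 himg h2
    -- evaluate at a vector with value 1/2
    have hyy : dotProduct y y ≠ 0 := by
      intro h
      exact hy0 ((dotProduct_self_eq_zero).1 h)
    obtain ⟨m, hm⟩ := hall ((2 * dotProduct y y)⁻¹ • y)
    have h1 : dotL y ((2 * dotProduct y y)⁻¹ • y)
        = (2 * dotProduct y y)⁻¹ * dotProduct y y := by
      rw [dotL_apply, smul_dotProduct, smul_eq_mul]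
    have hhalf : (2 * dotProduct y y)⁻¹ * dotProduct y y = 2⁻¹ := by
      field_simp
    rw [h1, hhalf] at hm
    have hcast : ((2 * m : ℤ) : ℝ) = ((1 : ℤ) : ℝ) := by
      push_cast
      rw [hm]
      norm_num
    have h2m : (2 * m : ℤ) = 1 := Int.cast_injective hcast
    omega
  · -- dual condition → dense
    intro hdual
    by_contra hnd
    set G : AddSubgroup (Fin n → ℝ) := A.topologicalClosure with hG
    have hGc : IsClosed (G : Set (Fin n → ℝ)) := AddSubgroup.isClosed_topologicalClosure A
    have hGne : G ≠ ⊤ := by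
      intro h
      apply hnd
      have : (G : Set (Fin n → ℝ)) = Set.univ := by rw [h]; rfl
      have hcl : closure (A : Set (Fin n → ℝ)) = Set.univ := this
      rw [dense_iff_closure_eq]
      exact hcl
    have hGspan : span ℝ (G : Set (Fin n → ℝ)) = ⊤ := by
      apply le_antisymm le_top
      rw [← hspanΛ]
      apply span_mono
      intro v hv
      exact A.le_topologicalClosure (AddSubgroup.mem_sup.2
        ⟨0, AddSubgroup.zero_mem _, v, hv, zero_add v⟩)
    obtain ⟨f, hf0, hfint⟩ := aux_exists_functional G hGc hGne hGspan
    set y : Fin n → ℝ := fun i => f (Pi.single i 1) with hy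
    have hrepr : ∀ v, f v = dotProduct v y := fun v => dotL_eq_of_single f v
    have hy0 : y ≠ 0 := by
      intro h0
      apply hf0
      refine LinearMap.ext fun v => ?_
      rw [hrepr v, h0]
      simp
    have hxA : x ∈ A := AddSubgroup.mem_sup.2
      ⟨x, AddSubgroup.mem_zmultiples x, 0, AddSubgroup.zero_mem _, add_zero x⟩
    refine hdual y hy0 ?_ ?_
    · intro v hv
      obtain ⟨m, hm⟩ := hfint v (A.le_topologicalClosure
        (AddSubgroup.mem_sup.2 ⟨0, AddSubgroup.zero_mem _, v, hv, zero_add v⟩))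
      exact ⟨m, by rw [← hrepr v]; exact hm⟩
    · obtain ⟨m, hm⟩ := hfint x (A.le_topologicalClosure hxA)
      exact ⟨m, by rw [← hrepr x]; exact hm⟩

end Part1

section Part2

open Submodule Module Set

lemma aux_finrank_closure_eq_span {M : Type*} [AddCommGroup M] (s : Set M) :
    Module.finrank ℤ (AddSubgroup.closure s) = Module.finrank ℤ (span ℤ s) := by
  rw [← Submodule.span_int_eq_addSubgroupClosure]
  refine LinearEquiv.finrank_eq (AddEquiv.toIntLinearEquiv ?_)
  exact { toFun := fun a => ⟨a.1, a.2⟩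
          invFun := fun a => ⟨a.1, a.2⟩
          left_inv := fun a => rfl
          right_inv := fun a => rfl
          map_add' := fun a b => rfl }

lemma aux_finrank_ker_dotL {n : ℕ} {y : Fin n → ℝ} (hy : y ≠ 0) :
    finrank ℝ (LinearMap.ker (dotL y)) = n - 1 := by
  have hyy : dotProduct y y ≠ 0 := fun h => hy (dotProduct_self_eq_zero.1 h)
  have hrange : LinearMap.range (dotL y) = ⊤ := by
    rw [Submodule.eq_top_iff']
    intro t
    exact ⟨(t / dotProduct y y) • y, by
      rw [dotL_apply, smul_dotProduct, smul_eq_mul, div_mul_cancel₀ _ hyy]⟩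
  have h := LinearMap.finrank_range_add_finrank_ker (dotL y)
  rw [hrange, finrank_top, Module.finrank_fin_fun ℝ, Module.finrank_self] at h
  omega

lemma aux_discrete_of_le {M : Type*} [NormedAddCommGroup M] {p q : Submodule ℤ M}
    (h : p ≤ q) (hq : DiscreteTopology q) : DiscreteTopology p :=
  DiscreteTopology.of_subset hq h

set_option maxHeartbeats 1000000 in
theorem aux_dual_iff_det {n : ℕ} (Λ : AddSubgroup (Fin n → ℝ)) [DiscreteTopology Λ]
    (hspanΛ : span ℝ (Λ : Set (Fin n → ℝ)) = ⊤) (x : Fin n → ℝ) :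
    (∀ y : Fin n → ℝ, y ≠ 0 → (∀ v ∈ Λ, ∃ m : ℤ, dotProduct v y = m) →
        ¬ ∃ k : ℤ, dotProduct x y = k) ↔
      (∀ (r : ℤ), r ≠ 0 → ∀ l ∈ Λ, ∀ ℓ : Fin (n - 1) → (Fin n → ℝ), (∀ i, ℓ i ∈ Λ) →
        Module.finrank ℤ (AddSubgroup.closure (Set.range ℓ)) = n - 1 →
        Matrix.det (Matrix.of (fun i : Fin n =>
          if h : (i : ℕ) = 0 then r • x + l
          else ℓ ⟨(i : ℕ) - 1, Nat.sub_lt_sub_right (Nat.one_le_iff_ne_zero.2 h) i.isLt⟩)) ≠ 0) := by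
  classical
  set LΛ : Submodule ℤ (Fin n → ℝ) := AddSubgroup.toIntSubmodule Λ with hLΛ
  haveI hdiscΛ : DiscreteTopology LΛ := ‹DiscreteTopology Λ›
  have hspanL : span ℝ (LΛ : Set (Fin n → ℝ)) = ⊤ := hspanΛ
  haveI hZ : IsZLattice ℝ LΛ := ⟨hspanL⟩
  have hrankΛ : finrank ℤ LΛ = n := by
    rw [ZLattice.rank ℝ LΛ, Module.finrank_fin_fun]
  constructor
  · -- dual condition → nonzero determinants
    intro hdual r hr l hl ℓ hℓ hrank hdet
    obtain ⟨y, hy0, hmv⟩ := (Matrix.exists_mulVec_eq_zero_iff).2 hdet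
    obtain ⟨i1, hi1⟩ := Function.ne_iff.1 hy0
    have hn : 0 < n := i1.pos
    set M := Matrix.of (fun i : Fin n =>
      if h : (i : ℕ) = 0 then r • x + l
      else ℓ ⟨(i : ℕ) - 1, Nat.sub_lt_sub_right (Nat.one_le_iff_ne_zero.2 h) i.isLt⟩) with hM
    have hrow : ∀ i : Fin n, dotProduct (M i) y = 0 := by
      intro i
      have := congrFun hmv i
      exact this
    have h0 : dotProduct (r • x + l) y = 0 := by
      have h := hrow ⟨0, hn⟩
      have hM0 : M ⟨0, hn⟩ = r • x + l := by
        funext j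
        rw [hM, Matrix.of_apply, dif_pos rfl]
      rwa [hM0] at h
    have hrows : ∀ j : Fin (n - 1), dotProduct (ℓ j) y = 0 := by
      intro j
      have hlt : j.1 + 1 < n := by have := j.isLt; omega
      have h := hrow ⟨j.1 + 1, hlt⟩
      have hMj : M ⟨j.1 + 1, hlt⟩ = ℓ j := by
        funext j'
        rw [hM, Matrix.of_apply, dif_neg (Nat.succ_ne_zero j.1)]
        exact congrFun (congrArg ℓ (Fin.ext (by simp))) j'
      rwa [hMj] at h
    -- the span of the ℓ's is the hyperplane orthogonal to y
    set Lℓ : Submodule ℤ (Fin n → ℝ) := span ℤ (Set.range ℓ) with hLℓ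
    have hrank' : finrank ℤ Lℓ = n - 1 := by
      rw [← aux_finrank_closure_eq_span]; exact hrank
    have hLℓΛ : Lℓ ≤ LΛ := span_le.2 (by rintro - ⟨j, rfl⟩; exact hℓ j)
    haveI hdiscLℓ : DiscreteTopology Lℓ := aux_discrete_of_le hLℓΛ hdiscΛ
    have hsLℓ : span ℝ (Lℓ : Set (Fin n → ℝ)) = span ℝ (Set.range ℓ) :=
      Submodule.span_span_of_tower ℤ ℝ (Set.range ℓ)
    have hfrspan : finrank ℝ (span ℝ (Set.range ℓ)) = n - 1 := by
      rw [← hsLℓ, ← aux_finrank_int_eq_finrank_span Lℓ]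
      exact hrank'
    set Hy := LinearMap.ker (dotL y) with hHy
    have hHyrank : finrank ℝ Hy = n - 1 := aux_finrank_ker_dotL hy0
    have hle : span ℝ (Set.range ℓ) ≤ Hy := by
      rw [span_le]
      rintro - ⟨j, rfl⟩
      exact LinearMap.mem_ker.2 (hrows j)
    have heq : span ℝ (Set.range ℓ) = Hy :=
      Submodule.eq_of_le_of_finrank_eq hle (by rw [hfrspan, hHyrank])
    -- K = Λ ∩ Hy has rank n - 1
    set K : Submodule ℤ (Fin n → ℝ) := LΛ ⊓ (Hy.restrictScalars ℤ) with hK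
    haveI hdiscK : DiscreteTopology K := aux_discrete_of_le inf_le_left hdiscΛ
    have hKle : (K : Set (Fin n → ℝ)) ⊆ (Hy : Set (Fin n → ℝ)) := fun v hv =>
      (Submodule.mem_inf.1 hv).2
    have hLℓK : Lℓ ≤ K := by
      rw [hLℓ, span_le]
      rintro - ⟨j, rfl⟩
      exact Submodule.mem_inf.2 ⟨hℓ j, show (dotL y) (ℓ j) = 0 from hrows j⟩
    have hKrank : finrank ℤ K = n - 1 := by
      have h1 : finrank ℤ K = finrank ℝ (span ℝ (K : Set (Fin n → ℝ))) :=
        aux_finrank_int_eq_finrank_span K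
      have h2 : finrank ℝ (span ℝ (K : Set (Fin n → ℝ))) ≤ n - 1 := by
        rw [← hHyrank]
        exact Submodule.finrank_mono (span_le.2 hKle)
      have h3 : (n - 1 : ℕ) ≤ finrank ℝ (span ℝ (K : Set (Fin n → ℝ))) := by
        rw [← hfrspan, ← hsLℓ]
        exact Submodule.finrank_mono (span_mono (SetLike.coe_subset_coe.2 hLℓK))
      omega
    -- the image of Λ under the pairing with y has rank 1, hence is cyclic
    set ψ : LΛ →ₗ[ℤ] ℝ := ((dotL y).restrictScalars ℤ).comp LΛ.subtype with hψ
    have hkerψ : LinearMap.ker ψ = K.comap LΛ.subtype := by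
      apply le_antisymm
      · rintro ⟨v, hvΛ⟩ hv
        have h2 : dotL y v = 0 := hv
        exact Submodule.mem_comap.2 (Submodule.mem_inf.2 ⟨hvΛ, show (dotL y) v = 0 from h2⟩)
      · rintro ⟨v, hvΛ⟩ hv
        have h2 := (Submodule.mem_inf.1 (Submodule.mem_comap.1 hv)).2
        exact LinearMap.mem_ker.2 (LinearMap.mem_ker.1 h2)
    have hkerrank : finrank ℤ (LinearMap.ker ψ) = n - 1 := by
      rw [hkerψ]
      rw [LinearEquiv.finrank_eq (Submodule.comapSubtypeEquivOfLe inf_le_left)]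
      exact hKrank
    haveI : Module.Finite ℤ LΛ := inferInstance
    have hq := Submodule.finrank_quotient_add_finrank (LinearMap.ker ψ)
    rw [hrankΛ, hkerrank] at hq
    have hqrank : finrank ℤ (LΛ ⧸ LinearMap.ker ψ) = 1 := by omega
    have hrankA : finrank ℤ (LinearMap.range ψ) = 1 := by
      rw [← LinearEquiv.finrank_eq ψ.quotKerEquivRange]
      exact hqrank
    set A := LinearMap.range ψ with hA
    haveI : Module.Finite ℤ (LΛ ⧸ LinearMap.ker ψ) := inferInstance
    haveI : Module.Finite ℤ A := Module.Finite.equiv ψ.quotKerEquivRange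
    haveI : Module.Free ℤ A := inferInstance
    set bA : Basis (Fin 1) ℤ A := (Module.Free.chooseBasis ℤ A).reindex
      (Fintype.equivFinOfCardEq (by
        rw [← Module.finrank_eq_card_chooseBasisIndex, hrankA])) with hbA
    set α : ℝ := (bA 0 : ℝ) with hα
    have hα0 : α ≠ 0 := by
      simp only [hα, ne_eq, Submodule.coe_eq_zero]
      exact bA.ne_zero 0
    have hmul : ∀ a : A, ∃ m : ℤ, (a : ℝ) = m * α := by
      intro a
      refine ⟨bA.repr a 0, ?_⟩
      conv_lhs => rw [← bA.sum_repr a]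
      rw [Fin.sum_univ_one, Submodule.coe_smul, zsmul_eq_mul, hα]
    -- contradiction with the dual hypothesis
    set y' : Fin n → ℝ := ((r : ℝ) * α⁻¹) • y with hy'
    have hy'0 : y' ≠ 0 :=
      smul_ne_zero (mul_ne_zero (Int.cast_ne_zero.2 hr) (inv_ne_zero hα0)) hy0
    have hdoty' : ∀ v : Fin n → ℝ, dotProduct v y'
        = ((r : ℝ) * α⁻¹) * dotProduct v y := by
      intro v
      rw [hy', dotProduct_smul, smul_eq_mul]
    refine hdual y' hy'0 ?_ ?_
    · intro v hv
      obtain ⟨m, hm⟩ := hmul ⟨ψ ⟨v, hv⟩, LinearMap.mem_range.2 ⟨⟨v, hv⟩, rfl⟩⟩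
      have hvy : dotProduct v y = m * α := hm
      refine ⟨r * m, ?_⟩
      rw [hdoty', hvy]
      push_cast
      calc (r : ℝ) * α⁻¹ * ((m : ℝ) * α) = (r : ℝ) * (m : ℝ) * (α⁻¹ * α) := by ring
        _ = (r : ℝ) * (m : ℝ) := by rw [inv_mul_cancel₀ hα0, mul_one]
    · obtain ⟨ml, hml⟩ := hmul ⟨ψ ⟨l, hl⟩, LinearMap.mem_range.2 ⟨⟨l, hl⟩, rfl⟩⟩
      have hly : dotProduct l y = ml * α := hml
      refine ⟨-ml, ?_⟩
      have hr0 : dotProduct (r • x) y + dotProduct l y = 0 := by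
        rw [← add_dotProduct]; exact h0
      have hrx : dotProduct (r • x) y = (r : ℝ) * dotProduct x y := by
        rw [← Int.cast_smul_eq_zsmul ℝ, smul_dotProduct, smul_eq_mul]
      rw [hrx, hly] at hr0
      rw [hdoty']
      push_cast
      have : (r : ℝ) * dotProduct x y = -(ml * α) := by linarith
      calc (r : ℝ) * α⁻¹ * dotProduct x y
          = α⁻¹ * ((r : ℝ) * dotProduct x y) := by ring
        _ = α⁻¹ * (-(ml * α)) := by rw [this]
        _ = -((ml : ℝ) * (α⁻¹ * α)) := by ring
        _ = -ml := by rw [inv_mul_cancel₀ hα0, mul_one]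
  · -- nonzero determinants → dual condition
    intro hdet y hy0 hint hex
    obtain ⟨k, hk⟩ := hex
    set Ar : AddSubgroup ℝ := AddSubgroup.map (dotL y).toAddMonoidHom Λ with hAr
    set B : AddSubgroup ℤ := Ar.comap (Int.castAddHom ℝ) with hB
    obtain ⟨d, hd⟩ := Int.subgroup_cyclic B
    have hmemB : ∀ v ∈ Λ, ∃ m : ℤ, dotProduct v y = m ∧ m ∈ B := by
      intro v hv
      obtain ⟨m, hm⟩ := hint v hv
      refine ⟨m, hm, ?_⟩
      simp only [hB, AddSubgroup.mem_comap, Int.coe_castAddHom]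
      exact ⟨v, hv, hm⟩
    have hBdvd : ∀ m ∈ B, ∃ c : ℤ, m = c * d := by
      intro m hm
      rw [hd] at hm
      obtain ⟨c, hc⟩ := AddSubgroup.mem_closure_singleton.1 hm
      exact ⟨c, by rw [← hc, smul_eq_mul]⟩
    -- d ≠ 0
    have hv0 : ∃ v ∈ Λ, dotProduct v y ≠ 0 := by
      by_contra hno
      push_neg at hno
      have hsub : (Λ : Set (Fin n → ℝ)) ⊆ (LinearMap.ker (dotL y) : Set (Fin n → ℝ)) :=
        fun v hv => LinearMap.mem_ker.2 (hno v hv)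
      have htop : (⊤ : Submodule ℝ (Fin n → ℝ)) ≤ LinearMap.ker (dotL y) := by
        rw [← hspanΛ]
        exact span_le.2 hsub
      have : dotProduct y y = 0 := htop Submodule.mem_top
      exact hy0 (dotProduct_self_eq_zero.1 this)
    have hd0 : d ≠ 0 := by
      obtain ⟨v, hv, hvy⟩ := hv0
      obtain ⟨m, hm, hmB⟩ := hmemB v hv
      obtain ⟨c, hc⟩ := hBdvd m hmB
      intro h
      rw [h, mul_zero] at hc
      rw [hc] at hm
      exact hvy (by simpa using hm)
    have hdR : (d : ℝ) ≠ 0 := Int.cast_ne_zero.2 hd0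
    -- an element of Λ pairing to exactly d
    have hdB : d ∈ B := by
      rw [hd]
      exact AddSubgroup.subset_closure rfl
    obtain ⟨lam, hlamΛ, hlam⟩ : ∃ lam ∈ Λ, dotProduct lam y = d := by
      have := hdB
      simp only [hB, AddSubgroup.mem_comap, Int.coe_castAddHom] at this
      obtain ⟨v, hv, hvd⟩ := this
      exact ⟨v, hv, hvd⟩
    set Hy := LinearMap.ker (dotL y) with hHy
    have hHyrank : finrank ℝ Hy = n - 1 := aux_finrank_ker_dotL hy0
    set K : Submodule ℤ (Fin n → ℝ) := LΛ ⊓ (Hy.restrictScalars ℤ) with hK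
    haveI hdiscK : DiscreteTopology K := aux_discrete_of_le inf_le_left hdiscΛ
    -- the correction map
    set c : (Fin n → ℝ) →ₗ[ℝ] (Fin n → ℝ) :=
      LinearMap.id - (((d : ℝ)⁻¹ • (dotL y)).smulRight lam) with hc
    have hcapply : ∀ v, c v = v - ((d : ℝ)⁻¹ * dotProduct v y) • lam := by
      intro v
      simp [hc, LinearMap.smulRight_apply, mul_smul, smul_eq_mul]
    have hcΛ : ∀ v ∈ Λ, c v ∈ K := by
      intro v hv
      obtain ⟨m, hm, hmB⟩ := hmemB v hv
      obtain ⟨q, hq⟩ := hBdvd m hmB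
      refine Submodule.mem_inf.2 ⟨?_, ?_⟩
      · -- c v ∈ Λ
        show c v ∈ Λ
        have : c v = v - q • lam := by
          rw [hcapply, hm, hq]
          push_cast
          rw [← Int.cast_smul_eq_zsmul ℝ q lam]
          congr 2
          field_simp
        rw [this]
        exact Λ.sub_mem hv (AddSubgroup.zsmul_mem Λ hlamΛ q)
      · -- c v ∈ Hy
        show dotProduct (c v) y = 0
        rw [hcapply, sub_dotProduct, smul_dotProduct, hlam, smul_eq_mul]
        field_simp
        simp
    have hHyle : Hy ≤ span ℝ (K : Set (Fin n → ℝ)) := by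
      intro h hh
      have hch : c h = h := by
        have hdot : dotProduct h y = 0 := LinearMap.mem_ker.1 hh
        rw [hcapply, hdot]
        simp
      have h1 : h ∈ Submodule.map c (span ℝ (Λ : Set (Fin n → ℝ))) := by
        rw [hspanΛ]
        exact ⟨h, Submodule.mem_top, hch⟩
      rw [Submodule.map_span] at h1
      refine span_mono ?_ h1
      rintro - ⟨v, hv, rfl⟩
      exact hcΛ v hv
    have hspanK : span ℝ (K : Set (Fin n → ℝ)) = Hy :=
      le_antisymm (span_le.2 fun v hv => hv.2) hHyle
    have hKrank : finrank ℤ K = n - 1 := by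
      rw [aux_finrank_int_eq_finrank_span K, hspanK]
      exact hHyrank
    -- choose a basis of K
    haveI : Module.Finite ℤ K := inferInstance
    haveI : Module.Free ℤ K := inferInstance
    set bK := Module.Free.chooseBasis ℤ K with hbK
    have hcard : Fintype.card (Module.Free.ChooseBasisIndex ℤ K) = n - 1 := by
      rw [← Module.finrank_eq_card_chooseBasisIndex, hKrank]
    set e := Fintype.equivFinOfCardEq hcard with he
    set ℓ : Fin (n - 1) → (Fin n → ℝ) := fun j => (bK (e.symm j) : Fin n → ℝ) with hℓ
    have hℓΛ : ∀ j, ℓ j ∈ Λ := fun j => (Submodule.mem_inf.1 (bK (e.symm j)).2).1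
    have hℓHy : ∀ j, dotProduct (ℓ j) y = 0 := fun j =>
      show (dotL y) (ℓ j) = 0 from (Submodule.mem_inf.1 (bK (e.symm j)).2).2
    have hrange : Set.range ℓ = Subtype.val '' (Set.range bK) := by
      ext v
      constructor
      · rintro ⟨j, rfl⟩
        exact ⟨bK (e.symm j), ⟨e.symm j, rfl⟩, rfl⟩
      · rintro ⟨w, ⟨i, rfl⟩, rfl⟩
        exact ⟨e i, by simp [hℓ]⟩
    have hclosrank : Module.finrank ℤ (AddSubgroup.closure (Set.range ℓ)) = n - 1 := by
      rw [aux_finrank_closure_eq_span, hrange]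
      have h1 : span ℤ (Subtype.val '' (Set.range bK)) = Submodule.map K.subtype (span ℤ (Set.range bK)) := by
        rw [Submodule.map_span]
        rfl
      rw [h1, bK.span_eq, Submodule.map_top, Submodule.range_subtype]
      exact hKrank
    -- apply the hypothesis and derive a contradiction
    have hdetne := hdet (-d) (neg_ne_zero.2 hd0) (k • lam) (AddSubgroup.zsmul_mem Λ hlamΛ k)
      ℓ hℓΛ hclosrank
    apply hdetne
    rw [← Matrix.exists_mulVec_eq_zero_iff]
    refine ⟨y, hy0, ?_⟩
    have hMv : ∀ i : Fin n, dotProduct ((Matrix.of (fun i : Fin n =>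
        if h : (i : ℕ) = 0 then (-d) • x + k • lam
        else ℓ ⟨(i : ℕ) - 1, Nat.sub_lt_sub_right (Nat.one_le_iff_ne_zero.2 h) i.isLt⟩)) i) y = 0 := by
      intro i
      by_cases hi : (i : ℕ) = 0
      · have hrow0 : (Matrix.of (fun i : Fin n =>
            if h : (i : ℕ) = 0 then (-d) • x + k • lam
            else ℓ ⟨(i : ℕ) - 1, Nat.sub_lt_sub_right (Nat.one_le_iff_ne_zero.2 h) i.isLt⟩)) i = (-d) • x + k • lam := by
          funext j
          rw [Matrix.of_apply, dif_pos hi]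
        rw [hrow0, add_dotProduct, ← Int.cast_smul_eq_zsmul ℝ (-d) x,
          ← Int.cast_smul_eq_zsmul ℝ k lam, smul_dotProduct, smul_dotProduct,
          smul_eq_mul, smul_eq_mul, hk, hlam]
        push_cast
        ring
      · have hrowj : (Matrix.of (fun i : Fin n =>
            if h : (i : ℕ) = 0 then (-d) • x + k • lam
            else ℓ ⟨(i : ℕ) - 1, Nat.sub_lt_sub_right (Nat.one_le_iff_ne_zero.2 h) i.isLt⟩)) i
            = ℓ ⟨(i : ℕ) - 1, Nat.sub_lt_sub_right (Nat.one_le_iff_ne_zero.2 hi) i.isLt⟩ := by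
          funext j
          rw [Matrix.of_apply, dif_neg hi]
        rw [hrowj]
        exact hℓHy _
    funext i
    exact hMv i

end Part2


/-- Lemma 1(c): for a lattice `Λ` in `ℝⁿ` and `x ∈ ℝⁿ`, the integer multiples of `x` are
dense in `ℝⁿ/Λ` if and only if for every nonzero integer `r`, every `λ ∈ Λ` and all
`ℓ₁, …, ℓ_{n-1} ∈ Λ` generating a subgroup of `ℤ`-rank `n - 1`, the `n × n` matrix whose
first row is `r • x + λ` and whose remaining rows are the `ℓᵢ` has nonzero determinant. -/
theorem dense_multiples_iff_det_ne_zero (n : ℕ) (Λ : AddSubgroup (Fin n → ℝ))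
    (hdisc : DiscreteTopology Λ) (hcomp : CompactSpace ((Fin n → ℝ) ⧸ Λ)) (x : Fin n → ℝ) :
    Dense (Set.range fun m : ℤ => (QuotientAddGroup.mk (m • x) : (Fin n → ℝ) ⧸ Λ)) ↔
      ∀ (r : ℤ), r ≠ 0 → ∀ l ∈ Λ, ∀ ℓ : Fin (n - 1) → (Fin n → ℝ), (∀ i, ℓ i ∈ Λ) →
        Module.finrank ℤ (AddSubgroup.closure (Set.range ℓ)) = n - 1 →
        Matrix.det (Matrix.of (fun i : Fin n =>
          if h : (i : ℕ) = 0 then r • x + l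
          else ℓ ⟨(i : ℕ) - 1, by have := i.isLt; omega⟩)) ≠ 0 := by
  haveI := hdisc
  have hspan : Submodule.span ℝ (Λ : Set (Fin n → ℝ)) = ⊤ :=
    aux_span_top_of_compactSpace Λ hcomp
  exact (aux_dense_iff_dual Λ hcomp hspan x).trans (aux_dual_iff_det Λ hspan x)
end

section
/- Let L be a number field which is Galois over ℚ of degree d, with Galois group Gal(L/ℚ) = {σ₁ = id, σ₂, …, σ_d}. Let x be a nonzero element of L. Then there exist a nonzero integer m and a unit ε of the ring of integers O_L of L such that for every d-tuple (n₁,…,n_d) ∈ ℤ^d: if σ₁(x)^{n₁}·σ₂(x)^{n₂}⋯σ_d(x)^{n_d} is a unit of O_L (as an element of L*), then σ₁(x^m ε)^{n₁}·σ₂(x^m ε)^{n₂}⋯σ_d(x^m ε)^{n_d} = 1. Moreover, m can be taken to be the order of the class group of L times the degree d of L over ℚ (in particular m can be chosen independently of x). -/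
open NumberField

set_option linter.unusedSectionVars false

section keylemma
variable {G : Type*} [Group G] [Fintype G]

/-- translation action of `G` on `G → ℤ`. -/
def rho (g : G) : (G → ℤ) →ₗ[ℤ] (G → ℤ) where
  toFun n := fun h => n (g⁻¹ * h)
  map_add' := fun _ _ => rfl
  map_smul' := fun _ _ => rfl

lemma rho_apply (g : G) (n : G → ℤ) (h : G) : rho g n h = n (g⁻¹ * h) := rfl

lemma rho_comp (a b : G) (n : G → ℤ) : rho a (rho b n) = rho (a * b) n := by
  funext k
  simp [rho_apply, mul_inv_rev, mul_assoc]

lemma rho_one (n : G → ℤ) : rho (1 : G) n = n := by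
  funext k
  simp [rho_apply]

end keylemma

section keylemma2
variable {G : Type*} [Group G] [Fintype G] [DecidableEq G]

lemma exists_proj (Λ : Submodule ℤ (G → ℤ))
    (hsat : ∀ (k : ℤ), k ≠ 0 → ∀ n, k • n ∈ Λ → n ∈ Λ) :
    ∃ p : (G → ℤ) →ₗ[ℤ] (G → ℤ), (∀ n, p n ∈ Λ) ∧ ∀ n ∈ Λ, p n = n := by
  have htf : NoZeroSMulDivisors ℤ ((G → ℤ) ⧸ Λ) := by
    constructor
    intro k q h
    by_cases hk : k = 0
    · exact Or.inl hk
    · refine Or.inr ?_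
      obtain ⟨n, rfl⟩ := Submodule.mkQ_surjective Λ q
      have h2 : Λ.mkQ (k • n) = 0 := by rw [map_smul]; exact h
      have hkn : k • n ∈ Λ := (Submodule.Quotient.mk_eq_zero Λ).mp h2
      have : n ∈ Λ := hsat k hk n hkn
      simpa [Submodule.Quotient.mk_eq_zero] using this
  have : Module.Free ℤ ((G → ℤ) ⧸ Λ) := Module.free_of_finite_type_torsion_free'
  have : Module.Projective ℤ ((G → ℤ) ⧸ Λ) := Module.Projective.of_free
  obtain ⟨s, hs⟩ := Module.projective_lifting_property Λ.mkQ LinearMap.id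
    (Submodule.mkQ_surjective Λ)
  refine ⟨(LinearMap.id : (G → ℤ) →ₗ[ℤ] (G → ℤ)) - s ∘ₗ Λ.mkQ, ?_, ?_⟩
  · intro n
    have h1 : Λ.mkQ (s (Λ.mkQ n)) = Λ.mkQ n := by
      have := congrArg (fun f => f (Λ.mkQ n)) hs
      simpa using this
    have h0 : Λ.mkQ (((LinearMap.id : (G → ℤ) →ₗ[ℤ] (G → ℤ)) - s ∘ₗ Λ.mkQ) n) = 0 := by
      simp only [map_sub, LinearMap.sub_apply, LinearMap.coe_comp, Function.comp_apply,
        LinearMap.id_apply]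
      rw [sub_eq_zero]
      exact h1.symm
    exact (Submodule.Quotient.mk_eq_zero Λ).mp h0
  · intro n hn
    have h0 : Λ.mkQ n = 0 := (Submodule.Quotient.mk_eq_zero Λ).mpr hn
    simp [LinearMap.sub_apply, h0]

lemma exists_w (Λ : Submodule ℤ (G → ℤ))
    (hstab : ∀ (g : G), ∀ n ∈ Λ, rho g n ∈ Λ)
    (hsat : ∀ (k : ℤ), k ≠ 0 → ∀ n, k • n ∈ Λ → n ∈ Λ) :
    ∃ w ∈ Λ, ∀ n ∈ Λ,
      (∑ g : G, n g • rho g w) = (Fintype.card G : ℤ) • n := by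
  obtain ⟨p, hp1, hp2⟩ := exists_proj Λ hsat
  set E : (G → ℤ) →ₗ[ℤ] (G → ℤ) := ∑ g : G, (rho g) ∘ₗ p ∘ₗ (rho g⁻¹) with hE
  have hEapp : ∀ n, E n = ∑ g : G, rho g (p (rho g⁻¹ n)) := by
    intro n
    rw [hE]
    simp only [LinearMap.sum_apply, LinearMap.coe_comp, Function.comp_apply]
  have hErange : ∀ n, E n ∈ Λ := by
    intro n
    rw [hEapp]
    exact Submodule.sum_mem Λ (fun g _ => hstab g _ (hp1 _))
  have hEfix : ∀ n ∈ Λ, E n = (Fintype.card G : ℤ) • n := by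
    intro n hn
    rw [hEapp]
    have : ∀ g : G, rho g (p (rho g⁻¹ n)) = n := by
      intro g
      rw [hp2 _ (hstab g⁻¹ n hn), rho_comp, mul_inv_cancel, rho_one]
    rw [Finset.sum_congr rfl (fun g _ => this g)]
    simp [Finset.sum_const, Finset.card_univ]
  have hEequiv : ∀ (h : G) (n : G → ℤ), E (rho h n) = rho h (E n) := by
    intro h n
    rw [hEapp, hEapp, map_sum]
    refine Fintype.sum_equiv (Equiv.mulLeft h).symm _ _ (fun g => ?_)
    show rho g (p (rho g⁻¹ (rho h n))) = rho h (rho (h⁻¹ * g) (p (rho (h⁻¹ * g)⁻¹ n)))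
    rw [rho_comp, rho_comp]
    have e1 : h * (h⁻¹ * g) = g := by group
    have e2 : (h⁻¹ * g)⁻¹ = g⁻¹ * h := by group
    rw [e1, e2]
  set δ : G → ℤ := fun h => if h = 1 then 1 else 0 with hδ
  refine ⟨E δ, hErange δ, ?_⟩
  intro n hn
  have hrep : (∑ g : G, n g • rho g δ) = n := by
    funext k
    simp only [Finset.sum_apply, Pi.smul_apply, rho_apply, hδ, smul_eq_mul]
    have hterm : ∀ g : G, n g * (if g⁻¹ * k = 1 then (1:ℤ) else 0)
        = if g = k then n g else 0 := by
      intro g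
      by_cases hgk : g = k
      · simp [hgk]
      · have : ¬ (g⁻¹ * k = 1) := by
          rw [inv_mul_eq_one]
          exact hgk
        simp [hgk, this]
    rw [Finset.sum_congr rfl (fun g _ => hterm g)]
    simp
  calc (∑ g : G, n g • rho g (E δ)) = ∑ g : G, n g • E (rho g δ) := by
        simp_rw [hEequiv]
      _ = E (∑ g : G, n g • rho g δ) := by rw [map_sum]; simp_rw [map_smul]
      _ = E n := by rw [hrep]
      _ = (Fintype.card G : ℤ) • n := hEfix n hn

end keylemma2

section nf
variable {L : Type*} [Field L] [NumberField L]

noncomputable def unitsSub (L : Type*) [Field L] [NumberField L] : Subgroup Lˣ :=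
  MonoidHom.range (Units.map (algebraMap (𝓞 L) L).toMonoidHom)

lemma mem_unitsSub_iff (z : Lˣ) :
    z ∈ unitsSub L ↔ IsIntegral ℤ (z : L) ∧ IsIntegral ℤ ((z⁻¹ : Lˣ) : L) := by
  constructor
  · rintro ⟨u, rfl⟩
    refine ⟨RingOfIntegers.isIntegral_coe (u : 𝓞 L), ?_⟩
    rw [← map_inv]
    exact RingOfIntegers.isIntegral_coe ((u⁻¹ : (𝓞 L)ˣ) : 𝓞 L)
  · rintro ⟨h1, h2⟩
    refine ⟨⟨⟨(z : L), h1⟩, ⟨((z⁻¹ : Lˣ) : L), h2⟩, ?_, ?_⟩, ?_⟩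
    · apply RingOfIntegers.coe_injective
      show (z : L) * ((z⁻¹ : Lˣ) : L) = 1
      simp
    · apply RingOfIntegers.coe_injective
      show ((z⁻¹ : Lˣ) : L) * (z : L) = 1
      simp
    · exact Units.ext rfl

private lemma keyInt (w : Lˣ) (m : ℕ) (hm : m ≠ 0)
    (h : IsIntegral ℤ ((w ^ (m : ℤ) : Lˣ) : L)) : IsIntegral ℤ (w : L) := by
  apply IsIntegral.of_pow (Nat.pos_of_ne_zero hm)
  rwa [Units.val_zpow_eq_zpow_val, zpow_natCast] at h

private lemma pos_case (z : Lˣ) (m : ℕ) (hm : m ≠ 0) (h : z ^ (m : ℤ) ∈ unitsSub L) :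
    z ∈ unitsSub L := by
  rw [mem_unitsSub_iff] at h ⊢
  refine ⟨keyInt z m hm h.1, keyInt z⁻¹ m hm ?_⟩
  have h2 := h.2
  rwa [← inv_zpow] at h2

lemma zpow_mem_unitsSub (z : Lˣ) (k : ℤ) (hk : k ≠ 0) (h : z ^ k ∈ unitsSub L) :
    z ∈ unitsSub L := by
  rcases lt_or_gt_of_ne hk with hneg | hpos
  · apply pos_case z (-k).toNat (by omega)
    have hcast : ((-k).toNat : ℤ) = -k := Int.toNat_of_nonneg (by omega)
    rw [hcast, zpow_neg]
    exact inv_mem h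
  · apply pos_case z k.toNat (by omega)
    have hcast : (k.toNat : ℤ) = k := Int.toNat_of_nonneg (by omega)
    rwa [hcast]


section uu
variable {L : Type*} [Field L] [NumberField L]

/-- action of a Galois automorphism on units -/
noncomputable def phi (g : L ≃ₐ[ℚ] L) : Lˣ →* Lˣ :=
  Units.map g.toAlgHom.toRingHom.toMonoidHom

lemma phi_coe (g : L ≃ₐ[ℚ] L) (z : Lˣ) : ((phi g z : Lˣ) : L) = g (z : L) := rfl

lemma phi_phi (g h : L ≃ₐ[ℚ] L) (z : Lˣ) : phi g (phi h z) = phi (g * h) z := by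
  apply Units.ext
  rw [phi_coe, phi_coe, phi_coe, AlgEquiv.mul_apply]

/-- the product of Galois twists with integer exponents -/
noncomputable def uu (X : Lˣ) (n : (L ≃ₐ[ℚ] L) → ℤ) : Lˣ :=
  ∏ g : (L ≃ₐ[ℚ] L), (phi g X) ^ (n g)

lemma uu_add (X : Lˣ) (a b : (L ≃ₐ[ℚ] L) → ℤ) : uu X (a + b) = uu X a * uu X b := by
  rw [uu, uu, uu, ← Finset.prod_mul_distrib]
  exact Finset.prod_congr rfl (fun g _ => by rw [Pi.add_apply, zpow_add])

lemma uu_zero (X : Lˣ) : uu X (0 : (L ≃ₐ[ℚ] L) → ℤ) = 1 := by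
  simp [uu]

lemma uu_smul (X : Lˣ) (k : ℤ) (a : (L ≃ₐ[ℚ] L) → ℤ) : uu X (k • a) = uu X a ^ k := by
  rw [uu, uu]
  rw [← Finset.prod_zpow]
  exact Finset.prod_congr rfl (fun g _ => by
    rw [Pi.smul_apply, smul_eq_mul, mul_comm, zpow_mul])

lemma uu_sum (X : Lˣ) {ι : Type*} (s : Finset ι) (f : ι → ((L ≃ₐ[ℚ] L) → ℤ)) :
    uu X (∑ i ∈ s, f i) = ∏ i ∈ s, uu X (f i) := by
  classical
  induction s using Finset.cons_induction with
  | empty => simp [uu_zero]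
  | cons a s ha ih => rw [Finset.sum_cons, Finset.prod_cons, uu_add, ih]

lemma uu_mul (z z' : Lˣ) (n : (L ≃ₐ[ℚ] L) → ℤ) : uu (z * z') n = uu z n * uu z' n := by
  rw [uu, uu, uu, ← Finset.prod_mul_distrib]
  exact Finset.prod_congr rfl (fun g _ => by rw [map_mul, mul_zpow])

lemma uu_zpow (z : Lˣ) (k : ℤ) (n : (L ≃ₐ[ℚ] L) → ℤ) : uu (z ^ k) n = uu z n ^ k := by
  rw [uu, uu, ← Finset.prod_zpow]
  exact Finset.prod_congr rfl (fun g _ => by rw [map_zpow, ← zpow_mul, ← zpow_mul, mul_comm])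

lemma uu_rho (X : Lˣ) (g : L ≃ₐ[ℚ] L) (n : (L ≃ₐ[ℚ] L) → ℤ) :
    uu X (rho g n) = phi g (uu X n) := by
  rw [uu, uu, map_prod]
  refine (Fintype.prod_equiv (Equiv.mulLeft g) _ _ (fun h => ?_)).symm
  rw [map_zpow, phi_phi]
  congr 1
  rw [rho_apply]
  congr 1
  simp

end uu
end nf

section lam
variable {L : Type*} [Field L] [NumberField L]

/-- the relation lattice -/
noncomputable def lam (X : Lˣ) : Submodule ℤ ((L ≃ₐ[ℚ] L) → ℤ) where
  carrier := {n | uu X n ∈ unitsSub L}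
  add_mem' := by
    intro a b ha hb
    simp only [Set.mem_setOf_eq, uu_add] at *
    exact mul_mem ha hb
  zero_mem' := by
    simp only [Set.mem_setOf_eq, uu_zero]
    exact one_mem _
  smul_mem' := by
    intro k n h
    simp only [Set.mem_setOf_eq, uu_smul] at *
    exact zpow_mem h k

lemma mem_lam_iff (X : Lˣ) (n : (L ≃ₐ[ℚ] L) → ℤ) : n ∈ lam X ↔ uu X n ∈ unitsSub L :=
  Iff.rfl

lemma lam_stable (X : Lˣ) (g : L ≃ₐ[ℚ] L) (n : (L ≃ₐ[ℚ] L) → ℤ) (hn : n ∈ lam X) :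
    rho g n ∈ lam X := by
  rw [mem_lam_iff, uu_rho, mem_unitsSub_iff] at *
  obtain ⟨h1, h2⟩ := hn
  constructor
  · rw [phi_coe]
    exact map_isIntegral_int g h1
  · rw [← map_inv, phi_coe]
    exact map_isIntegral_int g h2

lemma lam_sat (X : Lˣ) (k : ℤ) (hk : k ≠ 0) (n : (L ≃ₐ[ℚ] L) → ℤ)
    (hn : k • n ∈ lam X) : n ∈ lam X := by
  rw [mem_lam_iff, uu_smul] at hn
  exact zpow_mem_unitsSub (uu X n) k hk hn

end lam

/-- Lemma 4: let `L` be a number field, Galois over `ℚ` of degree `d`, with Galois group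
enumerated as `σ₁ = id, σ₂, …, σ_d`, and let `x ∈ L` be nonzero. Then there are a nonzero
integer `m` and a unit `ε` of the ring of integers of `L` such that whenever
`σ₁(x)^{n₁} ⋯ σ_d(x)^{n_d}` is a unit of the ring of integers (as an element of `L`),
one has `σ₁(xᵐε)^{n₁} ⋯ σ_d(xᵐε)^{n_d} = 1`; moreover `m` can be taken to be the order of
the class group of `L` times the degree `d`. -/
theorem units_relation_after_twist (L : Type*) [Field L] [NumberField L] [IsGalois ℚ L]
    (d : ℕ) (hd : Module.finrank ℚ L = d)
    (σ : Fin d → (L ≃ₐ[ℚ] L)) (hσ : Function.Bijective σ)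
    (hσ0 : ∀ h : 0 < d, σ ⟨0, h⟩ = 1)
    (x : L) (hx : x ≠ 0) :
    ∃ m : ℤ, m ≠ 0 ∧ m = (classNumber L : ℤ) * (d : ℤ) ∧
      ∃ ε : (𝓞 L)ˣ,
        ∀ n : Fin d → ℤ,
          (∃ u : (𝓞 L)ˣ, (∏ i, σ i x ^ n i) = algebraMap (𝓞 L) L u) →
          (∏ i, σ i (x ^ m * algebraMap (𝓞 L) L ε) ^ n i) = 1 := by
  classical
  have hcard : Fintype.card (L ≃ₐ[ℚ] L) = d := by
    rw [← Nat.card_eq_fintype_card, IsGalois.card_aut_eq_finrank]; exact hd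
  have hdpos : 0 < d := hcard ▸ Fintype.card_pos
  have hhpos : 0 < classNumber L := Fintype.card_pos
  set X : Lˣ := Units.mk0 x hx with hX
  obtain ⟨w, hwmem, hwkey⟩ := exists_w (lam X) (fun g n hn => lam_stable X g n hn)
    (fun k hk n hn => lam_sat X k hk n hn)
  rw [mem_lam_iff] at hwmem
  obtain ⟨u0, hu0⟩ := hwmem
  set h := classNumber L with hh
  refine ⟨(h : ℤ) * d, by positivity, rfl, (u0⁻¹) ^ h, ?_⟩
  intro n hn
  set e : Fin d ≃ (L ≃ₐ[ℚ] L) := Equiv.ofBijective σ hσ with he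
  set n' : (L ≃ₐ[ℚ] L) → ℤ := fun g => n (e.symm g) with hn'
  -- generic translation between the Fin d products and `uu`
  have hprod : ∀ z : Lˣ, (∏ i, σ i (z : L) ^ n i) = ((uu z n' : Lˣ) : L) := by
    intro z
    rw [uu]
    have hc := map_prod (Units.coeHom L) (fun g => phi g z ^ n' g) Finset.univ
    simp only [Units.coeHom_apply] at hc
    rw [hc]
    rw [Finset.prod_congr rfl (fun g (_ : g ∈ Finset.univ) =>
      (Units.val_zpow_eq_zpow_val (phi g z) (n' g)))]
    simp only [phi_coe]
    refine Fintype.prod_equiv e (fun i => (σ i) (z : L) ^ n i)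
      (fun g => (g (z : L)) ^ n' g) (fun i => ?_)
    simp [hn', he]
  -- the hypothesis puts n' in the lattice
  have hn'mem : n' ∈ lam X := by
    obtain ⟨u, hu⟩ := hn
    rw [mem_lam_iff]
    refine ⟨u, Units.ext ?_⟩
    have : ((uu X n' : Lˣ) : L) = algebraMap (𝓞 L) L u := by
      rw [← hprod X]
      convert hu using 2
      rfl
    simpa using this.symm
  have hkey := hwkey n' hn'mem
  rw [hcard] at hkey
  -- the twisted element as a unit
  set Y : Lˣ := X ^ ((h : ℤ) * d) * (Units.map (algebraMap (𝓞 L) L).toMonoidHom) ((u0⁻¹) ^ h)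
    with hY
  have hYcoe : (Y : L) = x ^ ((h : ℤ) * (d : ℤ)) * algebraMap (𝓞 L) L ((u0⁻¹) ^ h : (𝓞 L)ˣ) := by
    rw [hY, Units.val_mul, Units.val_zpow_eq_zpow_val]
    rfl
  have hgoal : ∏ i, σ i (x ^ ((h : ℤ) * (d : ℤ)) * algebraMap (𝓞 L) L ((u0⁻¹) ^ h : (𝓞 L)ˣ)) ^ n i
      = ((uu Y n' : Lˣ) : L) := by
    rw [← hYcoe]
    exact hprod Y
  rw [hgoal]
  -- main computation
  have hmap : (Units.map (algebraMap (𝓞 L) L).toMonoidHom) ((u0⁻¹) ^ h)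
      = (uu X w) ^ (-(h : ℤ)) := by
    rw [map_pow, map_inv, hu0, zpow_neg, zpow_natCast, inv_pow]
  have huuY : uu Y n' = 1 := by
    rw [hY, hmap, uu_mul, uu_zpow, uu_zpow]
    -- uu (uu X w) n' = uu X n' ^ d
    have hcw : uu (uu X w) n' = uu X n' ^ (d : ℤ) := by
      have h1 : uu (uu X w) n' = ∏ g : (L ≃ₐ[ℚ] L), uu X (n' g • rho g w) := by
        rw [uu]
        refine Finset.prod_congr rfl (fun g _ => ?_)
        rw [uu_smul, uu_rho]
      rw [h1, ← uu_sum, hkey, uu_smul]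
    rw [hcw, ← zpow_mul, ← zpow_add,
      show (h : ℤ) * (d : ℤ) + (d : ℤ) * (-(h : ℤ)) = 0 from by ring, zpow_zero]
  rw [huuY, Units.val_one]
end

section
/- Let L be a number field which is Galois over ℚ, with Galois group Gal(L/ℚ) = {σ₁ = id, σ₂, …, σ_d}. Given finitely many nonzero elements x⁽¹⁾, x⁽²⁾, …, x⁽ⁿ⁾ of L, there exist a nonzero integer m and units ε₁,…,εₙ of the ring of integers O_L of L such that, setting y⁽ⁱ⁾ = (x⁽ⁱ⁾)^m·εᵢ, the subgroup of L* generated by all the Galois conjugates σⱼ(y⁽ⁱ⁾) (1 ≤ i ≤ n, 1 ≤ j ≤ d) intersects the unit group O_L^× exactly in {1}. -/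
open NumberField
open scoped TensorProduct

namespace Cor1Aux

variable (L : Type*) [Field L] [NumberField L]

noncomputable def ι : Additive Lˣ →ₗ[ℤ] (ℚ ⊗[ℤ] Additive Lˣ) := TensorProduct.mk ℤ ℚ _ 1

def umap : (𝓞 L)ˣ →* Lˣ := Units.map (algebraMap (𝓞 L) L).toMonoidHom

variable {L}

def fmap (σ : L ≃ₐ[ℚ] L) : Additive Lˣ →+ Additive Lˣ :=
  MonoidHom.toAdditive (Units.map σ.toAlgHom.toRingHom.toMonoidHom)

lemma fmap_fmap (σ τ : L ≃ₐ[ℚ] L) (a : Additive Lˣ) :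
    fmap σ (fmap τ a) = fmap (σ * τ) a := by
  have h : (Units.map σ.toAlgHom.toRingHom.toMonoidHom)
        ((Units.map τ.toAlgHom.toRingHom.toMonoidHom) a.toMul)
      = (Units.map (σ * τ).toAlgHom.toRingHom.toMonoidHom) a.toMul :=
    Units.ext (by simp [Units.coe_map, AlgEquiv.mul_apply])
  exact congrArg Additive.ofMul h

lemma fmap_one (a : Additive Lˣ) : fmap (1 : L ≃ₐ[ℚ] L) a = a := by
  have h : (Units.map (1 : L ≃ₐ[ℚ] L).toAlgHom.toRingHom.toMonoidHom) a.toMul = a.toMul :=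
    Units.ext (by simp [Units.coe_map])
  exact congrArg Additive.ofMul h

noncomputable def T (σ : L ≃ₐ[ℚ] L) : (ℚ ⊗[ℤ] Additive Lˣ) →ₗ[ℚ] (ℚ ⊗[ℤ] Additive Lˣ) :=
  LinearMap.baseChange ℚ (fmap σ).toIntLinearMap

lemma T_ι (σ : L ≃ₐ[ℚ] L) (a : Additive Lˣ) : T σ (ι L a) = ι L (fmap σ a) := by
  exact LinearMap.baseChange_tmul (A := ℚ) (f := (fmap σ).toIntLinearMap) 1 a

lemma T_T (σ τ : L ≃ₐ[ℚ] L) (v : ℚ ⊗[ℤ] Additive Lˣ) : T σ (T τ v) = T (σ * τ) v := by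
  induction v using TensorProduct.induction_on with
  | zero => simp
  | tmul q a => simp [T, LinearMap.baseChange_tmul, fmap_fmap]
  | add u v hu hv => simp [map_add, hu, hv]

lemma T_one (v : ℚ ⊗[ℤ] Additive Lˣ) : T (1 : L ≃ₐ[ℚ] L) v = v := by
  induction v using TensorProduct.induction_on with
  | zero => simp
  | tmul q a => simp [T, LinearMap.baseChange_tmul, fmap_one]
  | add u v hu hv => simp [map_add, hu, hv]

variable (L)

noncomputable def jhom : Additive (𝓞 L)ˣ →+ (ℚ ⊗[ℤ] Additive Lˣ) :=
  (ι L).toAddMonoidHom.comp (MonoidHom.toAdditive (umap L))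

noncomputable def Usub : Submodule ℚ (ℚ ⊗[ℤ] Additive Lˣ) :=
  Submodule.span ℚ (Set.range (jhom L))

lemma jhom_mem_Usub (b : Additive (𝓞 L)ˣ) : jhom L b ∈ Usub L :=
  Submodule.subset_span ⟨b, rfl⟩

variable {L}

lemma T_jhom (σ : L ≃ₐ[ℚ] L) (b : Additive (𝓞 L)ˣ) :
    T σ (jhom L b) = jhom L (Additive.ofMul (Units.map
      ((galRestrict ℤ ℚ L (𝓞 L) σ)).toAlgHom.toRingHom.toMonoidHom b.toMul)) := by
  have h1 : T σ (jhom L b) = ι L (fmap σ (Additive.ofMul (umap L b.toMul))) := T_ι σ _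
  rw [h1]
  show ι L _ = ι L _
  congr 1
  refine congrArg Additive.ofMul (Units.ext ?_)
  show σ (algebraMap (𝓞 L) L (b.toMul : (𝓞 L)ˣ)) = algebraMap (𝓞 L) L
    ((Units.map ((galRestrict ℤ ℚ L (𝓞 L) σ)).toAlgHom.toRingHom.toMonoidHom b.toMul) :
      (𝓞 L))
  rw [Units.coe_map]
  exact (algebraMap_galRestrict_apply ℤ σ _).symm

lemma T_mem_Usub (σ : L ≃ₐ[ℚ] L) {v : ℚ ⊗[ℤ] Additive Lˣ} (hv : v ∈ Usub L) :
    T σ v ∈ Usub L := by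
  induction hv using Submodule.span_induction with
  | mem v hv =>
    obtain ⟨b, rfl⟩ := hv
    rw [T_jhom]
    exact jhom_mem_Usub L _
  | zero => simp
  | add u v _ _ hu hv => rw [map_add]; exact (Usub L).add_mem hu hv
  | smul q v _ hv => rw [map_smul]; exact (Usub L).smul_mem q hv

lemma exists_nsmul_mem {W : Type*} [AddCommGroup W] [Module ℚ W] (G : AddSubgroup W) {v : W}
    (hv : v ∈ Submodule.span ℚ (G : Set W)) : ∃ N : ℕ, 0 < N ∧ (N : ℤ) • v ∈ G := by
  induction hv using Submodule.span_induction with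
  | mem w hw => exact ⟨1, one_pos, by simpa using G.zsmul_mem hw 1⟩
  | zero => exact ⟨1, one_pos, by simpa using G.zero_mem⟩
  | add u w _ _ hu hw =>
    obtain ⟨N₁, hN₁, h₁⟩ := hu
    obtain ⟨N₂, hN₂, h₂⟩ := hw
    refine ⟨N₁ * N₂, Nat.mul_pos hN₁ hN₂, ?_⟩
    rw [smul_add]
    refine G.add_mem ?_ ?_
    · have : ((N₁ * N₂ : ℕ) : ℤ) • u = (N₂ : ℤ) • ((N₁ : ℤ) • u) := by
        rw [← mul_smul]; push_cast; ring_nf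
      rw [this]; exact G.zsmul_mem h₁ _
    · have : ((N₁ * N₂ : ℕ) : ℤ) • w = (N₁ : ℤ) • ((N₂ : ℤ) • w) := by
        rw [← mul_smul]; push_cast; ring_nf
      rw [this]; exact G.zsmul_mem h₂ _
  | smul q w _ hw =>
    obtain ⟨N, hN, h⟩ := hw
    refine ⟨q.den * N, Nat.mul_pos q.pos hN, ?_⟩
    have h2 : ((q.den * N : ℕ) : ℤ) • q • w = q.num • ((N : ℤ) • w) := by
      rw [← Int.cast_smul_eq_zsmul ℚ, ← Int.cast_smul_eq_zsmul ℚ (N : ℤ),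
        ← Int.cast_smul_eq_zsmul ℚ q.num, smul_smul, smul_smul]
      have hden : (q.den : ℚ) ≠ 0 := by exact_mod_cast q.den_ne_zero
      have hq : (q.den : ℚ) * q = (q.num : ℚ) := by
        rw [(div_eq_iff hden).mp (Rat.num_div_den q)]; ring
      congr 1
      push_cast
      calc (q.den : ℚ) * (N : ℚ) * q = ((q.den : ℚ) * q) * N := by ring
        _ = (q.num : ℚ) * N := by rw [hq]
    rw [h2]
    exact G.zsmul_mem h _

lemma pow_torsion_exponent (h : Lˣ) {n : ℕ} (hn : 0 < n) (hh : h ^ n = 1) :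
    h ^ ((NumberField.Units.torsionOrder L : ℕ)) = 1 := by
  have hxn : ((h : L)) ^ n = 1 := by
    have := congrArg (Units.val) hh
    simpa using this
  have hint : IsIntegral ℤ (h : L) :=
    IsIntegral.of_pow hn (by rw [hxn]; exact isIntegral_one)
  have hxn' : (((h : L))⁻¹) ^ n = 1 := by rw [inv_pow, hxn, inv_one]
  have hint' : IsIntegral ℤ (((h : L))⁻¹) :=
    IsIntegral.of_pow hn (by rw [hxn']; exact isIntegral_one)
  set a : 𝓞 L := ⟨(h : L), hint⟩ with ha
  set b : 𝓞 L := ⟨((h : L))⁻¹, hint'⟩ with hb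
  have hab : a * b = 1 := by
    ext
    show ((h : L)) * ((h : L))⁻¹ = 1
    exact mul_inv_cancel₀ (Units.ne_zero h)
  have hba : b * a = 1 := by rw [mul_comm]; exact hab
  set u : (𝓞 L)ˣ := ⟨a, b, hab, hba⟩ with hu
  have han : a ^ n = 1 := by
    refine NumberField.RingOfIntegers.coe_injective ?_
    rw [map_pow, map_one]
    exact hxn
  have hun : u ^ n = 1 := Units.ext (by rw [Units.val_pow_eq_pow_val]; exact han)
  have htor : u ∈ NumberField.Units.torsion L := by
    rw [NumberField.Units.torsion, CommGroup.mem_torsion, isOfFinOrder_iff_pow_eq_one]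
    exact ⟨n, hn, hun⟩
  set w : ℕ := (NumberField.Units.torsionOrder L : ℕ) with hw
  have hzeta : (⟨u, htor⟩ : NumberField.Units.torsion L) ^ w = 1 := by
    have := pow_card_eq_one' (G := NumberField.Units.torsion L) (x := ⟨u, htor⟩)
    simpa [hw, NumberField.Units.torsionOrder] using this
  have huw : u ^ w = 1 := by
    have := congrArg (Subtype.val) hzeta
    simpa using this
  have hmap : Units.map (algebraMap (𝓞 L) L).toMonoidHom u = h := by
    ext
    rfl
  rw [← hmap, ← map_pow, huw, map_one]

lemma ι_torsion {a : Additive Lˣ} (ha : ι L a = 0) : ∃ n : ℕ, 0 < n ∧ (n : ℤ) • a = 0 := by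
  haveI inst : IsLocalizedModule (nonZeroDivisors ℤ)
      (TensorProduct.mk ℤ ℚ (Additive Lˣ) 1) :=
    (isLocalizedModule_iff_isBaseChange (nonZeroDivisors ℤ) ℚ _).mpr
      (TensorProduct.isBaseChange ℤ (Additive Lˣ) ℚ)
  obtain ⟨s, hs⟩ := (IsLocalizedModule.eq_zero_iff (nonZeroDivisors ℤ)
      (TensorProduct.mk ℤ ℚ (Additive Lˣ) 1)).mp ha
  have hs0 : (s : ℤ) ≠ 0 := nonZeroDivisors.coe_ne_zero s
  refine ⟨(s : ℤ).natAbs, Int.natAbs_pos.mpr hs0, ?_⟩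
  have hsa : (s : ℤ) • a = 0 := hs
  rcases Int.natAbs_eq (s : ℤ) with h | h
  · rw [← h]; exact hsa
  · have h2 : ((s : ℤ).natAbs : ℤ) = -(s : ℤ) := by omega
    rw [h2, neg_smul, hsa, neg_zero]

end Cor1Aux

open Cor1Aux in
/-- Corollary 1: let `L` be a number field, Galois over `ℚ`. Given nonzero elements
`x⁽¹⁾, …, x⁽ⁿ⁾` of `L`, there are a nonzero integer `m` and units `ε₁, …, εₙ` of the ring
of integers of `L` such that, setting `y⁽ⁱ⁾ = (x⁽ⁱ⁾)ᵐ εᵢ`, the subgroup of `Lˣ` generated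
by all the Galois conjugates `σ(y⁽ⁱ⁾)` meets the unit group of the ring of integers of `L`
exactly in `{1}`. -/
theorem conjugates_subgroup_meets_units_trivially
    (L : Type*) [Field L] [NumberField L] [IsGalois ℚ L]
    (n : ℕ) (x : Fin n → L) (hx : ∀ i, x i ≠ 0) :
    ∃ m : ℤ, m ≠ 0 ∧ ∃ ε : Fin n → (𝓞 L)ˣ,
      Subgroup.closure {w : Lˣ | ∃ (i : Fin n) (σ : L ≃ₐ[ℚ] L),
          (w : L) = σ (x i ^ m * algebraMap (𝓞 L) L (ε i))} ⊓
        (Units.map (algebraMap (𝓞 L) L).toMonoidHom).range = ⊥ := by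
  classical
  obtain ⟨q, hq⟩ := Submodule.exists_isCompl (Usub L)
  set π₀ : (ℚ ⊗[ℤ] Additive Lˣ) →ₗ[ℚ] (ℚ ⊗[ℤ] Additive Lˣ) :=
    (Usub L).subtype ∘ₗ Submodule.linearProjOfIsCompl _ q hq with hπ₀def
  have hπ₀_mem : ∀ v, π₀ v ∈ Usub L := fun v => ((Submodule.linearProjOfIsCompl _ q hq) v).2
  have hπ₀_fix : ∀ v ∈ Usub L, π₀ v = v := by
    intro v hv
    exact congrArg (Usub L).subtype (Submodule.linearProjOfIsCompl_apply_left hq ⟨v, hv⟩)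
  haveI : Nonempty (L ≃ₐ[ℚ] L) := ⟨1⟩
  set c : ℚ := (Fintype.card (L ≃ₐ[ℚ] L) : ℚ) with hcdef
  have hc : c ≠ 0 := by
    rw [hcdef]
    exact_mod_cast Fintype.card_ne_zero
  set π : (ℚ ⊗[ℤ] Additive Lˣ) →ₗ[ℚ] (ℚ ⊗[ℤ] Additive Lˣ) :=
    c⁻¹ • ∑ σ : L ≃ₐ[ℚ] L, (T σ) ∘ₗ π₀ ∘ₗ (T σ⁻¹) with hπdef
  have hπ_apply : ∀ v, π v = c⁻¹ • ∑ σ : L ≃ₐ[ℚ] L, T σ (π₀ (T σ⁻¹ v)) := by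
    intro v
    rw [hπdef]
    simp [LinearMap.sum_apply]
  have hπ_mem : ∀ v, π v ∈ Usub L := by
    intro v
    rw [hπ_apply]
    refine (Usub L).smul_mem _ (Submodule.sum_mem _ fun σ _ => ?_)
    exact T_mem_Usub σ (hπ₀_mem _)
  have hπ_fix : ∀ v ∈ Usub L, π v = v := by
    intro v hv
    rw [hπ_apply]
    have h1 : ∀ σ : L ≃ₐ[ℚ] L, T σ (π₀ (T σ⁻¹ v)) = v := by
      intro σ
      rw [hπ₀_fix _ (T_mem_Usub σ⁻¹ hv), T_T, mul_inv_cancel, T_one]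
    rw [Finset.sum_congr rfl fun σ _ => h1 σ, Finset.sum_const, Finset.card_univ,
      ← Nat.cast_smul_eq_nsmul ℚ, ← hcdef, inv_smul_smul₀ hc]
  have hπ_comm : ∀ (τ : L ≃ₐ[ℚ] L) v, π (T τ v) = T τ (π v) := by
    intro τ v
    rw [hπ_apply, hπ_apply]
    rw [Fintype.sum_equiv (Equiv.mulLeft τ⁻¹)
      (fun σ => T σ (π₀ (T σ⁻¹ (T τ v)))) (fun ρ => T τ (T ρ (π₀ (T ρ⁻¹ v))))
      (fun σ => by
        show T σ (π₀ (T σ⁻¹ (T τ v))) = T τ (T (τ⁻¹ * σ) (π₀ (T (τ⁻¹ * σ)⁻¹ v)))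
        rw [T_T σ⁻¹ τ, T_T τ (τ⁻¹ * σ), show τ * (τ⁻¹ * σ) = σ by group,
          show (τ⁻¹ * σ)⁻¹ = σ⁻¹ * τ by group])]
    rw [← map_sum, map_smul]
  set P : Submodule ℚ (ℚ ⊗[ℤ] Additive Lˣ) := LinearMap.ker π with hPdef
  have hP_mem : ∀ {v}, v ∈ P → π v = 0 := fun hv => hv
  have hP_stab : ∀ (σ : L ≃ₐ[ℚ] L) {v}, v ∈ P → T σ v ∈ P := by
    intro σ v hv
    show π (T σ v) = 0
    rw [hπ_comm, hP_mem hv, map_zero]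
  have hPU : ∀ {v}, v ∈ P → v ∈ Usub L → v = 0 := by
    intro v hv hv'
    rw [← hπ_fix v hv', hP_mem hv]
  set xu : Fin n → Lˣ := fun i => Units.mk0 (x i) (hx i) with hxudef
  have hδmem : ∀ i, π (ι L (Additive.ofMul (xu i)))
      ∈ Submodule.span ℚ (((jhom L).range : AddSubgroup _) : Set _) := by
    intro i
    have h2 := hπ_mem (ι L (Additive.ofMul (xu i)))
    rwa [Usub, ← AddMonoidHom.coe_range] at h2
  choose Nf hNfpos hmem using fun i => exists_nsmul_mem (jhom L).range (hδmem i)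
  choose b hb using fun i => AddMonoidHom.mem_range.mp (hmem i)
  set N : ℕ := ∏ i, Nf i with hNdef
  have hNpos : 0 < N := Finset.prod_pos fun i _ => hNfpos i
  have hdvd : ∀ i, Nf i ∣ N := fun i => Finset.dvd_prod_of_mem _ (Finset.mem_univ i)
  set g : Fin n → Additive (𝓞 L)ˣ := fun i => ((N / Nf i : ℕ) : ℤ) • b i with hgdef
  have hg : ∀ i, jhom L (g i) = (N : ℤ) • π (ι L (Additive.ofMul (xu i))) := by
    intro i
    show jhom L (((N / Nf i : ℕ) : ℤ) • b i) = _
    rw [map_zsmul, hb i, ← mul_smul]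
    congr 1
    exact_mod_cast Nat.div_mul_cancel (hdvd i)
  set t : ℕ := (NumberField.Units.torsionOrder L : ℕ) with htdef
  have htpos : 0 < t := NumberField.Units.torsionOrder_pos L
  set m : ℤ := (N : ℤ) * (t : ℤ) with hmdef
  have hm : m ≠ 0 := by positivity
  set u : Fin n → (𝓞 L)ˣ := fun i => Additive.toMul (g i) with hudef
  set ε : Fin n → (𝓞 L)ˣ := fun i => ((u i)⁻¹) ^ t with hεdef
  refine ⟨m, hm, ε, ?_⟩
  set z : Fin n → Lˣ := fun i => (xu i) ^ (N : ℤ) * (umap L (u i))⁻¹ with hzdef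
  have hzP : ∀ i, ι L (Additive.ofMul (z i)) ∈ P := by
    intro i
    show π (ι L (Additive.ofMul (z i))) = 0
    have h1 : Additive.ofMul (z i)
        = (N : ℤ) • Additive.ofMul (xu i) - Additive.ofMul ((umap L (u i) : Lˣ)) := by
      show Additive.ofMul ((xu i) ^ (N : ℤ) * (umap L (u i))⁻¹) = _
      rw [ofMul_mul, ofMul_zpow, ofMul_inv, sub_eq_add_neg]
    have h2 : ι L (Additive.ofMul ((umap L (u i) : Lˣ))) = jhom L (g i) := rfl
    rw [h1, map_sub, map_zsmul, h2, map_sub, map_zsmul, hπ_fix _ (jhom_mem_Usub L _), hg i,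
      sub_self]
  set K : Subgroup Lˣ :=
    { carrier := {w : Lˣ | ι L (Additive.ofMul w) ∈ P}
      mul_mem' := by
        intro a b ha hb
        simp only [Set.mem_setOf_eq] at *
        rw [ofMul_mul, map_add]
        exact P.add_mem ha hb
      one_mem' := by
        simp only [Set.mem_setOf_eq, ofMul_one, map_zero]
        exact P.zero_mem
      inv_mem' := by
        intro a ha
        simp only [Set.mem_setOf_eq] at *
        rw [ofMul_inv, map_neg]
        exact P.neg_mem ha } with hKdef
  have hKmem : ∀ {w : Lˣ}, ι L (Additive.ofMul w) ∈ P → w ∈ K := fun h => h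
  have hKmem' : ∀ {w : Lˣ}, w ∈ K → ι L (Additive.ofMul w) ∈ P := fun h => h
  rw [eq_bot_iff]
  intro w0 hw0
  obtain ⟨hw1, hw2⟩ := hw0
  have hclos : Subgroup.closure {w : Lˣ | ∃ (i : Fin n) (σ : L ≃ₐ[ℚ] L),
      (w : L) = σ (x i ^ m * algebraMap (𝓞 L) L (ε i))} ≤ K.map (powMonoidHom t) := by
    rw [Subgroup.closure_le]
    rintro w ⟨i, σ, hw⟩
    have hz1 : (z i) ^ t = (xu i) ^ m * umap L (ε i) := by
      show ((xu i) ^ (N : ℤ) * (umap L (u i))⁻¹) ^ t = _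
      rw [mul_pow, ← zpow_natCast ((xu i) ^ (N : ℤ)), ← zpow_mul, ← hmdef]
      congr 1
    have hzval : ((z i : Lˣ) : L) ^ t = x i ^ m * algebraMap (𝓞 L) L (ε i) := by
      calc ((z i : Lˣ) : L) ^ t = (((z i) ^ t : Lˣ) : L) := (Units.val_pow_eq_pow_val _ _).symm
        _ = (((xu i) ^ m : Lˣ) : L) * ((umap L (ε i) : Lˣ) : L) := by rw [hz1, Units.val_mul]
        _ = x i ^ m * algebraMap (𝓞 L) L (ε i) := by
            rw [Units.val_zpow_eq_zpow_val]
            rfl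
    refine ⟨Units.map σ.toAlgHom.toRingHom.toMonoidHom (z i), ?_, ?_⟩
    · refine hKmem ?_
      rw [show ι L (Additive.ofMul (Units.map σ.toAlgHom.toRingHom.toMonoidHom (z i)))
        = T σ (ι L (Additive.ofMul (z i))) from (T_ι σ _).symm]
      exact hP_stab σ (hzP i)
    · refine Units.ext ?_
      show (((Units.map σ.toAlgHom.toRingHom.toMonoidHom (z i)) ^ t : Lˣ) : L) = (w : L)
      rw [hw, Units.val_pow_eq_pow_val]
      show (σ ((z i : Lˣ) : L)) ^ t = _
      rw [← map_pow, hzval]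
  have hw1' : w0 ∈ K.map (powMonoidHom t) := hclos hw1
  obtain ⟨h0, hh0, hh0w⟩ := hw1'
  obtain ⟨uu, huu⟩ := hw2
  have hιzero : ι L (Additive.ofMul w0) = 0 := by
    refine hPU ?_ ?_
    · rw [← hh0w]
      show ι L (Additive.ofMul (h0 ^ t)) ∈ P
      rw [ofMul_pow, map_nsmul, ← Nat.cast_smul_eq_nsmul ℚ]
      exact P.smul_mem _ (hKmem' hh0)
    · rw [← huu]
      exact jhom_mem_Usub L (Additive.ofMul uu)
  have hh0zero : ι L (Additive.ofMul h0) = 0 := by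
    have h1 : ι L (Additive.ofMul w0) = (t : ℚ) • ι L (Additive.ofMul h0) := by
      rw [← hh0w]
      show ι L (Additive.ofMul (h0 ^ t)) = _
      rw [ofMul_pow, map_nsmul, ← Nat.cast_smul_eq_nsmul ℚ]
    have h2 : (t : ℚ) • ι L (Additive.ofMul h0) = 0 := h1.symm.trans hιzero
    rcases smul_eq_zero.mp h2 with h3 | h3
    · exact absurd h3 (by exact_mod_cast htpos.ne')
    · exact h3
  obtain ⟨k, hkpos, hk⟩ := ι_torsion hh0zero
  have hpow : h0 ^ k = 1 := by
    have h4 : Additive.ofMul (h0 ^ (k : ℤ)) = 0 := by rw [ofMul_zpow]; exact hk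
    have h5 : h0 ^ (k : ℤ) = 1 := by
      have := congrArg Additive.toMul h4
      simpa using this
    rw [zpow_natCast] at h5
    exact h5
  have hfin : h0 ^ t = 1 := pow_torsion_exponent h0 hkpos hpow
  have hw0one : w0 = 1 := by
    rw [← hh0w]
    exact hfin
  rw [hw0one]
  exact Subgroup.one_mem ⊥
end

section
/- Assume Schanuel's conjecture: for every n ≥ 1 and all complex numbers z₁,…,zₙ that are linearly independent over ℚ, the field ℚ(z₁,…,zₙ, exp(z₁),…,exp(zₙ)) has transcendence degree at least n over ℚ. Then: if α₁,…,α_k are positive real algebraic numbers which are multiplicatively independent (i.e., α₁^{m₁}⋯α_k^{m_k} = 1 with m₁,…,m_k ∈ ℤ implies m₁ = ⋯ = m_k = 0), the real numbers log α₁, …, log α_k are algebraically independent over ℚ. -/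
/-!
Put `zᵢ = log αᵢ`. Multiplicative independence of the `αᵢ` is exactly `ℤ`-, hence `ℚ`-linear
independence of the `zᵢ`, so Schanuel's conjecture yields `k` algebraically independent numbers
among the `zᵢ` and `exp zᵢ = αᵢ`. The `αᵢ` are algebraic, so none of the chosen numbers is an `αᵢ`;
being `k` distinct `zᵢ`'s, they are all the `zᵢ` in some order.
-/

open Function

theorem Real.linearIndependent_int_log {ι : Type*} [Fintype ι] {α : ι → ℝ}
    (hpos : ∀ i, 0 < α i) (hmult : ∀ m : ι → ℤ, ∏ i, α i ^ m i = 1 → ∀ i, m i = 0) :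
    LinearIndependent ℤ (fun i => Real.log (α i)) := by
  rw [Fintype.linearIndependent_iff]
  intro m hm
  apply hmult m
  calc ∏ i, α i ^ m i = ∏ i, Real.exp (m i • Real.log (α i)) := by
        refine Finset.prod_congr rfl fun i _ => ?_
        rw [zsmul_eq_mul, ← Real.log_zpow, Real.exp_log (zpow_pos (hpos i) _)]
    _ = 1 := by rw [← Real.exp_sum, hm, Real.exp_zero]

theorem Real.linearIndependent_rat_log {ι : Type*} [Fintype ι] {α : ι → ℝ}
    (hpos : ∀ i, 0 < α i) (hmult : ∀ m : ι → ℤ, ∏ i, α i ^ m i = 1 → ∀ i, m i = 0) :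
    LinearIndependent ℚ (fun i => Real.log (α i)) :=
  (LinearIndependent.iff_fractionRing ℤ ℚ).mp (Real.linearIndependent_int_log hpos hmult)

section

variable {R A : Type*} [CommRing R] [CommRing A] [Algebra R A] {ι : Type*} [Finite ι]

theorem AlgebraicIndependent.of_comp_injective {x : ι → A} {σ : ι → ι} (hσ : Injective σ)
    (h : AlgebraicIndependent R (x ∘ σ)) : AlgebraicIndependent R x :=
  (algebraicIndependent_equiv (Equiv.ofBijective σ hσ.bijective_of_finite)).mp h

theorem AlgebraicIndependent.of_forall_eq_or_eq_isAlgebraic [Nontrivial R] {g z w : ι → A}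
    (hg : AlgebraicIndependent R g) (hgzw : ∀ i, ∃ j, g i = z j ∨ g i = w j)
    (hw : ∀ j, IsAlgebraic R (w j)) : AlgebraicIndependent R z := by
  have hgz : ∀ i, ∃ j, g i = z j := by
    intro i
    obtain ⟨j, hj | hj⟩ := hgzw i
    · exact ⟨j, hj⟩
    · exact absurd (hj ▸ hw j) (hg.transcendental i)
  choose σ hσ using hgz
  have hgσ : g = z ∘ σ := funext hσ
  refine AlgebraicIndependent.of_comp_injective (σ := σ) (fun a b hab => ?_) (hgσ ▸ hg)
  exact hg.injective (by rw [hσ a, hσ b, hab])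

end

/-- Assuming Schanuel's conjecture (if `z₁, …, zₙ ∈ ℂ` are `ℚ`-linearly independent, then
among the `2n` numbers `z₁, …, zₙ, exp z₁, …, exp zₙ` there are `n` that are algebraically
independent over `ℚ`), the natural logarithms of multiplicatively independent positive real
algebraic numbers are algebraically independent over `ℚ`. -/
theorem schanuel_implies_logs_algebraically_independent
    (schanuel : ∀ (n : ℕ) (z : Fin n → ℂ), LinearIndependent ℚ z →
      ∃ g : Fin n → ℂ, (∀ i, ∃ j, g i = z j ∨ g i = Complex.exp (z j)) ∧
        AlgebraicIndependent ℚ g)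
    (k : ℕ) (α : Fin k → ℝ) (hpos : ∀ i, 0 < α i) (halg : ∀ i, IsAlgebraic ℚ (α i))
    (hmult : ∀ m : Fin k → ℤ, (∏ i, α i ^ m i) = 1 → ∀ i, m i = 0) :
    AlgebraicIndependent ℚ (fun i => Real.log (α i)) := by
  let ofRealₐ : ℝ →ₐ[ℚ] ℂ := Complex.ofRealAm.restrictScalars ℚ
  have hlin : LinearIndependent ℚ (ofRealₐ ∘ fun i => Real.log (α i)) :=
    (Real.linearIndependent_rat_log hpos hmult).map' ofRealₐ.toLinearMap
      (LinearMap.ker_eq_bot.mpr Complex.ofReal_injective)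
  obtain ⟨g, hg, hgind⟩ := schanuel k _ hlin
  have hexp_alg : ∀ j, IsAlgebraic ℚ (Complex.exp (ofRealₐ (Real.log (α j)))) := fun j => by
    rw [show Complex.exp (ofRealₐ (Real.log (α j))) = ofRealₐ (α j) by
      simp [ofRealₐ, ← Complex.ofReal_exp, Real.exp_log (hpos j)]]
    exact (halg j).algHom ofRealₐ
  exact .of_comp ofRealₐ (hgind.of_forall_eq_or_eq_isAlgebraic hg hexp_alg)
end

section
/- Assume Schanuel's conjecture: for every n ≥ 1 and all complex numbers z₁,…,zₙ that are linearly independent over ℚ, the field ℚ(z₁,…,zₙ, exp(z₁),…,exp(zₙ)) has transcendence degree at least n over ℚ. Let y₁,…,y_k and u₁,…,u_s be positive real algebraic numbers such that y₁,…,y_k,u₁,…,u_s are multiplicatively independent (no nontrivial multiplicative relation with integer exponents among them). Let r be a nonzero integer, let ℓ₁,…,ℓ_k be elements of the ℤ-linear span of {log u₁,…,log u_s} in ℝ, and let D₁,…,D_k be real numbers each of which is a value of a polynomial with integer coefficients evaluated at (log u₁,…,log u_s), with D_k ≠ 0. Then Σ_{i=1}^{k} (r·log yᵢ + ℓᵢ)·Dᵢ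 ≠ 0. -/
/-!
Multiplicative independence of `y₁, …, y_k, u₁, …, u_s` makes their logarithms linearly
independent over `ℚ`. Their exponentials are algebraic, so the `k + s` algebraically independent
numbers provided by Schanuel's conjecture must be the logarithms themselves. Hence the
`log yᵢ` are algebraically independent over `A = ℚ[log u₁, …, log u_s]`, which contains the
`ℓᵢ` and `Dᵢ`. The sum is `∑ᵢ (r Dᵢ) log yᵢ + ∑ᵢ ℓᵢ Dᵢ`, an affine expression in the `log yᵢ`
with coefficients in `A`; if it vanished, every coefficient would, including `r D_k ≠ 0`.
-/

open MvPolynomial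

def SchanuelConjecture : Prop :=
  ∀ (n : ℕ) (z : Fin n → ℂ), LinearIndependent ℚ z →
    ∃ g : Fin n → ℂ, (∀ i, ∃ j, g i = z j ∨ g i = Complex.exp (z j)) ∧ AlgebraicIndependent ℚ g

theorem Real.linearIndependent_int_log_comp {ι : Type*} [Fintype ι] {w : ι → ℝ}
    (hw : ∀ i, 0 < w i)
    (hmul : ∀ a : ι → ℤ, ∏ i, w i ^ a i = 1 → a = 0) :
    LinearIndependent ℤ (Real.log ∘ w) := by
  rw [Fintype.linearIndependent_iff]
  intro a ha
  have hlog : Real.log (∏ i, w i ^ a i) = 0 := by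
    rw [Real.log_prod fun i _ => (zpow_pos (hw i) _).ne']
    simpa [Real.log_zpow, zsmul_eq_mul] using ha
  refine congrFun (hmul a ?_)
  calc ∏ i, w i ^ a i = Real.exp (Real.log (∏ i, w i ^ a i)) :=
        (Real.exp_log (Finset.prod_pos fun i _ => zpow_pos (hw i) _)).symm
    _ = 1 := by rw [hlog, Real.exp_zero]

theorem SchanuelConjecture.algebraicIndependent_of_isAlgebraic_exp (hS : SchanuelConjecture)
    {ι : Type*} [Finite ι] {z : ι → ℂ} (hz : LinearIndependent ℚ z)
    (hexp : ∀ i, IsAlgebraic ℚ (Complex.exp (z i))) : AlgebraicIndependent ℚ z := by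
  obtain ⟨n, ⟨e⟩⟩ := Finite.exists_equiv_fin ι
  rw [← algebraicIndependent_equiv e.symm]
  obtain ⟨g, hg, hgind⟩ := hS n (z ∘ e.symm) (hz.comp _ e.symm.injective)
  choose σ hσ using fun i => (hg i).imp fun j hj => hj.resolve_right fun h =>
    hgind.transcendental i (h ▸ hexp (e.symm j) : IsAlgebraic ℚ (g i))
  have hσinj : Function.Injective σ := fun a b hab => hgind.injective (by rw [hσ, hσ, hab])
  rw [← algebraicIndependent_equiv
    (Equiv.ofBijective σ (Finite.injective_iff_bijective.mp hσinj))]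
  convert hgind
  funext i
  exact (hσ i).symm

theorem SchanuelConjecture.algebraicIndependent_real_of_isAlgebraic_exp (hS : SchanuelConjecture)
    {ι : Type*} [Finite ι] {v : ι → ℝ} (hv : LinearIndependent ℚ v)
    (hexp : ∀ i, IsAlgebraic ℚ (Real.exp (v i))) : AlgebraicIndependent ℚ v := by
  let f : ℝ →ₐ[ℚ] ℂ := Complex.ofRealAm.restrictScalars ℚ
  refine .of_comp f (hS.algebraicIndependent_of_isAlgebraic_exp ?_ fun i => ?_)
  · exact hv.map' f.toLinearMap (LinearMap.ker_eq_bot.mpr Complex.ofReal_injective)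
  · simpa [f, ← Complex.ofReal_exp] using (hexp i).algebraMap (A := ℂ)

theorem AlgebraicIndependent.eq_zero_of_sum_smul_add_algebraMap_eq_zero {R A ι : Type*}
    [CommRing R] [CommRing A] [Algebra R A] [Fintype ι] {x : ι → A}
    (hx : AlgebraicIndependent R x) {a : ι → R} {b : R}
    (h : ∑ i, a i • x i + algebraMap R A b = 0) (i : ι) : a i = 0 := by
  classical
  have hP : ∑ j, C (a j) * X j + C b = (0 : MvPolynomial ι R) :=
    hx.eq_zero_of_aeval_eq_zero _ (by simpa [Algebra.smul_def] using h)
  have hb : b = 0 := by simpa using congrArg (eval 0) hP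
  simpa [hb, Pi.single_apply] using congrArg (eval (Pi.single i 1)) hP

theorem AlgebraicIndependent.eq_zero_of_sum_mul_add_eq_zero {R A ι κ : Type*}
    [CommRing R] [CommRing A] [Algebra R A] [Fintype ι] {x : ι → A} {w : κ → A}
    (h : AlgebraicIndependent R (Sum.elim x w)) {a : ι → A} {b : A}
    (ha : ∀ i, a i ∈ Algebra.adjoin R (Set.range w)) (hb : b ∈ Algebra.adjoin R (Set.range w))
    (hsum : ∑ i, a i * x i + b = 0) (i : ι) : a i = 0 := by
  have := (AlgebraicIndependent.sumElim_iff.mp h).2.eq_zero_of_sum_smul_add_algebraMap_eq_zero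
    (a := fun i => ⟨a i, ha i⟩) (b := ⟨b, hb⟩) hsum i
  exact congrArg Subtype.val this

theorem Algebra.mem_adjoin_of_mem_adjoin_of_tower (R S : Type*) {A : Type*} [CommSemiring R]
    [CommSemiring S] [CommSemiring A] [Algebra R S] [Algebra S A] [Algebra R A]
    [IsScalarTower R S A] {s : Set A} {x : A}
    (hx : x ∈ Algebra.adjoin R s) : x ∈ Algebra.adjoin S s :=
  Algebra.adjoin_adjoin_of_tower (S := S) R s ▸ Algebra.subset_adjoin hx

/-- The concluding step of the proof of Theorem 3: assuming Schanuel's conjecture, if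
`y₁, …, y_k, u₁, …, u_s` are multiplicatively independent positive real algebraic numbers,
`r` is a nonzero integer, each `ℓᵢ` lies in the `ℤ`-span of the `log uⱼ`, and each `Dᵢ` is
an integer-polynomial expression in the `log uⱼ` with `D_k ≠ 0`, then
`∑ᵢ (r·log yᵢ + ℓᵢ)·Dᵢ ≠ 0`. -/
theorem schanuel_implies_sum_ne_zero
    (schanuel : ∀ (n : ℕ) (z : Fin n → ℂ), LinearIndependent ℚ z →
      ∃ g : Fin n → ℂ, (∀ i, ∃ j, g i = z j ∨ g i = Complex.exp (z j)) ∧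
        AlgebraicIndependent ℚ g)
    (k s : ℕ) (hk : 0 < k)
    (y : Fin k → ℝ) (u : Fin s → ℝ)
    (hy : ∀ i, 0 < y i) (hu : ∀ j, 0 < u j)
    (hyalg : ∀ i, IsAlgebraic ℚ (y i)) (hualg : ∀ j, IsAlgebraic ℚ (u j))
    (hmult : ∀ (a : Fin k → ℤ) (b : Fin s → ℤ),
      (∏ i, y i ^ a i) * (∏ j, u j ^ b j) = 1 → (∀ i, a i = 0) ∧ (∀ j, b j = 0))
    (r : ℤ) (hr : r ≠ 0)
    (ℓ : Fin k → ℝ)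
    (hℓ : ∀ i, ℓ i ∈ Submodule.span ℤ (Set.range fun j => Real.log (u j)))
    (D : Fin k → ℝ)
    (hD : ∀ i, ∃ p : MvPolynomial (Fin s) ℤ,
      D i = MvPolynomial.aeval (fun j => Real.log (u j)) p)
    (hDk : D ⟨k - 1, by omega⟩ ≠ 0) :
    (∑ i, ((r : ℝ) * Real.log (y i) + ℓ i) * D i) ≠ 0 := by
  set L : Fin s → ℝ := fun j => Real.log (u j)
  have hlog : LinearIndependent ℤ (Real.log ∘ Sum.elim y u) := by
    refine Real.linearIndependent_int_log_comp (by rintro (i | j); exacts [hy i, hu j])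
      fun a ha => ?_
    obtain ⟨hay, hau⟩ :=
      hmult (a ∘ Sum.inl) (a ∘ Sum.inr) (by simpa [Fintype.prod_sum_type] using ha)
    ext (i | j)
    exacts [hay i, hau j]
  have hind : AlgebraicIndependent ℚ (Sum.elim (fun i => Real.log (y i)) L) := by
    refine SchanuelConjecture.algebraicIndependent_real_of_isAlgebraic_exp schanuel ?_ ?_
    · rw [Sum.comp_elim] at hlog
      exact (LinearIndependent.iff_fractionRing ℤ ℚ).mp hlog
    · rintro (i | j)
      · simpa [Real.exp_log (hy i)] using hyalg i
      · simpa [L, Real.exp_log (hu j)] using hualg j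
  have hadj {x : ℝ} (hx : x ∈ Algebra.adjoin ℤ (Set.range L)) :
      x ∈ Algebra.adjoin ℚ (Set.range L) :=
    Algebra.mem_adjoin_of_mem_adjoin_of_tower ℤ ℚ hx
  have hDmem (i : Fin k) : D i ∈ Algebra.adjoin ℚ (Set.range L) := by
    obtain ⟨p, hp⟩ := hD i
    exact hadj (Algebra.adjoin_range_eq_range_aeval ℤ L ▸ ⟨p, hp.symm⟩)
  intro hsum
  refine mul_ne_zero (Int.cast_ne_zero.mpr hr) hDk <|
    hind.eq_zero_of_sum_mul_add_eq_zero (a := fun i => r * D i) (b := ∑ i, ℓ i * D i)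
      (fun i => mul_mem (Subalgebra.intCast_mem _ r) (hDmem i))
      (sum_mem fun i _ => mul_mem (hadj (Algebra.span_le_adjoin ℤ _ (hℓ i))) (hDmem i))
      ?_ ⟨k - 1, by omega⟩
  rw [← hsum, ← Finset.sum_add_distrib]
  exact Finset.sum_congr rfl fun i _ => by ring
end

section
/- Let Λ be the additive subgroup of ℝ³ generated by v₁ = (0, log 2, log 3), v₂ = (−log 2, 0, log 5), v₃ = (log 7, 0, log 2), and let w = (log 3, log 5, 0). Then w lies in the ℝ-linear span of v₁ and v₂ (explicitly, w = (log 5/log 2)·v₁ − (log 3/log 2)·v₂), and consequently the set of integer multiples {m•w : m ∈ ℤ}, taken modulo Λ, is not dense in ℝ³/Λ. -/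
/-!
The vectors `v₁`, `v₂` and `w` lie in a plane, the kernel of `f x = x ⬝ᵥ (v₁ ⨯₃ v₂)`.
The functional `f` sends `Λ` onto `ℤ d` with `d = v₃ ⬝ᵥ (v₁ ⨯₃ v₂) ≠ 0`, so `f⁻¹(ℤ d)` is a
proper closed subgroup of `ℝ³` containing `Λ` and every multiple of `w`; the multiples of `w`
therefore stay in a proper closed subset of `ℝ³/Λ`.
-/

open Real Matrix AddSubgroup

theorem not_dense_range_zsmul_mk_of_le_closed_subgroup {G : Type*} [AddCommGroup G]
    [TopologicalSpace G] [IsTopologicalAddGroup G] {Λ K : AddSubgroup G} {w : G}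
    (hK : IsClosed (K : Set G)) (hK_ne_top : K ≠ ⊤) (hΛK : Λ ≤ K) (hw : w ∈ K) :
    ¬ Dense (Set.range fun m : ℤ => (QuotientAddGroup.mk (m • w) : G ⧸ Λ)) := by
  intro hd
  have hsub : QuotientAddGroup.mk ⁻¹'
      Set.range (fun m : ℤ => (QuotientAddGroup.mk (m • w) : G ⧸ Λ)) ⊆ K := by
    rintro x ⟨m, hm⟩
    have hx : -x + m • w ∈ K := hΛK (QuotientAddGroup.eq.mp hm.symm)
    simpa using K.sub_mem (K.zsmul_mem hw m) hx
  have hK_dense : Dense (K : Set G) := (QuotientAddGroup.dense_preimage_mk.mpr hd).mono hsub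
  exact hK_ne_top (SetLike.coe_injective (hK.closure_eq ▸ hK_dense.closure_eq))

theorem half_notMem_zmultiples {a : ℝ} (ha : a ≠ 0) : a / 2 ∉ zmultiples a := by
  rintro ⟨k, hk⟩
  have hk_half : (k : ℝ) = 1 / 2 := by
    apply mul_right_cancel₀ ha
    rw [← zsmul_eq_mul]
    exact hk.trans (by ring)
  have : 2 * k = 1 := by exact_mod_cast (by linarith : (2 * k : ℝ) = 1)
  omega

theorem not_dense_range_zsmul_mk_closure_of_linearMap {E : Type*} [AddCommGroup E] [Module ℝ E]
    [TopologicalSpace E] [IsTopologicalAddGroup E] (f : E →ₗ[ℝ] ℝ) (hf : Continuous f)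
    {u v z w : E} (hu : f u = 0) (hv : f v = 0) (hz : f z ≠ 0)
    (hw : w ∈ Submodule.span ℝ {u, v}) :
    ¬ Dense (Set.range fun m : ℤ =>
      (QuotientAddGroup.mk (m • w) : E ⧸ AddSubgroup.closure {u, v, z})) := by
  set K : AddSubgroup E := (zmultiples (f z)).comap f.toAddMonoidHom
  have hspan_ker : Submodule.span ℝ {u, v} ≤ LinearMap.ker f := by
    rw [Submodule.span_le]
    rintro x (rfl | rfl) <;> simpa
  refine not_dense_range_zsmul_mk_of_le_closed_subgroup (K := K) ?_ ?_ ?_ ?_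
  · exact (AddSubgroup.isClosed_of_discrete (H := zmultiples (f z))).preimage hf
  · intro hK_top
    have hz_half : (1 / 2 : ℝ) • z ∈ K := hK_top ▸ AddSubgroup.mem_top _
    refine half_notMem_zmultiples hz ?_
    simpa [K, div_eq_inv_mul] using hz_half
  · rw [AddSubgroup.closure_le]
    rintro x (rfl | rfl | rfl)
    · simp [K, hu]
    · simp [K, hv]
    · exact mem_zmultiples _
  · simp [K, LinearMap.mem_ker.mp (hspan_ker hw)]

theorem not_dense_range_zsmul_mk_closure_of_triple_product_ne_zero {u v z w : Fin 3 → ℝ}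
    (hw : w ∈ Submodule.span ℝ {u, v}) (huvz : z ⬝ᵥ u ⨯₃ v ≠ 0) :
    ¬ Dense (Set.range fun m : ℤ =>
      (QuotientAddGroup.mk (m • w) : (Fin 3 → ℝ) ⧸ AddSubgroup.closure {u, v, z})) :=
  not_dense_range_zsmul_mk_closure_of_linearMap ((dotProductBilin ℝ ℝ).flip (u ⨯₃ v))
    (LinearMap.continuous_of_finiteDimensional _) (by simp) (by simp) (by simpa using huvz) hw

/-- Section 4 of the paper: with `Λ ⊂ ℝ³` the lattice generated by
`v₁ = (0, log 2, log 3)`, `v₂ = (−log 2, 0, log 5)`, `v₃ = (log 7, 0, log 2)` and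
`w = (log 3, log 5, 0)`, the vector `w` equals `(log 5/log 2)·v₁ − (log 3/log 2)·v₂`, so
lies in the real span of `v₁, v₂`, and the integer multiples of `w` are not dense in
`ℝ³/Λ`. -/
theorem counterexample_multiples_not_dense :
    ![Real.log 3, Real.log 5, (0 : ℝ)] =
      (Real.log 5 / Real.log 2) • ![(0 : ℝ), Real.log 2, Real.log 3] -
        (Real.log 3 / Real.log 2) • ![-Real.log 2, 0, Real.log 5] ∧
    ![Real.log 3, Real.log 5, (0 : ℝ)] ∈
      Submodule.span ℝ
        ({![(0 : ℝ), Real.log 2, Real.log 3], ![-Real.log 2, 0, Real.log 5]} :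
          Set (Fin 3 → ℝ)) ∧
    ¬ Dense (Set.range fun m : ℤ =>
        (QuotientAddGroup.mk (m • ![Real.log 3, Real.log 5, (0 : ℝ)]) :
          (Fin 3 → ℝ) ⧸
            (AddSubgroup.closure
              {![(0 : ℝ), Real.log 2, Real.log 3], ![-Real.log 2, 0, Real.log 5],
                ![Real.log 7, 0, Real.log 2]} : AddSubgroup (Fin 3 → ℝ)))) := by
  have hlog2 : 0 < log 2 := log_pos (by norm_num)
  have hcomb : ![log 3, log 5, (0 : ℝ)] =
      (log 5 / log 2) • ![(0 : ℝ), log 2, log 3] - (log 3 / log 2) • ![-log 2, 0, log 5] := by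
    ext i
    fin_cases i <;> simp [field]
  have hspan : ![log 3, log 5, (0 : ℝ)] ∈
      Submodule.span ℝ ({![(0 : ℝ), log 2, log 3], ![-log 2, 0, log 5]} : Set (Fin 3 → ℝ)) := by
    rw [hcomb]
    exact Submodule.sub_mem _ (Submodule.smul_mem _ _ (Submodule.subset_span (by simp)))
      (Submodule.smul_mem _ _ (Submodule.subset_span (by simp)))
  have htriple : ![log 7, 0, log 2] ⬝ᵥ ![(0 : ℝ), log 2, log 3] ⨯₃ ![-log 2, 0, log 5] =
      log 2 * (log 5 * log 7 + log 2 ^ 2) := by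
    simp [cross_apply, dotProduct, Fin.sum_univ_three]
    ring
  refine ⟨hcomb, hspan, not_dense_range_zsmul_mk_closure_of_triple_product_ne_zero hspan ?_⟩
  rw [htriple]
  have hlog5 : 0 < log 5 := log_pos (by norm_num)
  have hlog7 : 0 < log 7 := log_pos (by norm_num)
  positivity
end

section
/- Assume the Four Exponentials Conjecture: for every 2×2 matrix (λ_{ij}) of complex numbers such that exp(λ_{ij}) is algebraic for all i, j, if the two rows are linearly independent over ℚ and the two columns are linearly independent over ℚ, then the determinant λ₁₁λ₂₂ − λ₁₂λ₂₁ is nonzero. Then: if ε₁, ε₂ are positive real algebraic numbers such that log ε₁ and log ε₂ are linearly independent over ℚ, x₁, x₂ are positive real algebraic numbers, and r is a real number with log x₁ = r·log ε₁ and log x₂ = r·log ε₂, then r is rational. -/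
/-!
Put `v = (log ε₁, log ε₂)` and let `M` be the matrix with rows `v` and `r • v`. Its entries are
the logarithms of `ε₁, ε₂, x₁, x₂`, so their exponentials are algebraic, and `det M = 0`. The
columns of `M` are `ℚ`-independent because their first coordinates are, so the Four Exponentials
Conjecture forces the rows `v, r • v` to be `ℚ`-dependent, which means that `r` is rational.
-/

theorem exists_rat_eq_of_not_linearIndependent_pair_smul {K V : Type*} [DivisionRing K]
    [AddCommGroup V] [Module K V] [Module ℚ V] {x : V} (hx : x ≠ 0) {c : K}
    (h : ¬ LinearIndependent ℚ ![x, c • x]) : ∃ q : ℚ, c = q := by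
  obtain ⟨q, hq⟩ : ∃ q : ℚ, q • x = c • x := by simpa [LinearIndependent.pair_iff' hx] using h
  refine ⟨q, smul_left_injective K hx ?_⟩
  change c • x = (q : K) • x
  rw [ratCast_smul_eq K ℚ, Rat.cast_id, hq]

theorem isAlgebraic_exp_log {y : ℝ} (hy : IsAlgebraic ℚ y) :
    IsAlgebraic ℚ (Real.exp (Real.log y)) := by
  rcases eq_or_ne y 0 with rfl | hy0
  · simpa using isAlgebraic_one
  rw [Real.exp_log_eq_abs hy0]
  rcases abs_choice y with h | h <;> rw [h]
  exacts [hy, hy.neg]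

theorem isAlgebraic_cexp_ofReal_log {y : ℝ} (hy : IsAlgebraic ℚ y) :
    IsAlgebraic ℚ (Complex.exp (Real.log y)) := by
  rw [← Complex.ofReal_exp]
  exact (isAlgebraic_exp_log hy).algebraMap

theorem LinearIndependent.complex_ofReal {ι : Type*} {v : ι → ℝ} (hv : LinearIndependent ℚ v) :
    LinearIndependent ℚ (fun i => (v i : ℂ)) :=
  hv.map' (Complex.ofRealAm.toLinearMap.restrictScalars ℚ)
    (LinearMap.ker_eq_bot.2 Complex.ofReal_injective)

theorem four_exponentials_implies_ratio_rational_general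
    (fourExp : ∀ M : Matrix (Fin 2) (Fin 2) ℂ,
      (∀ i j, IsAlgebraic ℚ (Complex.exp (M i j))) →
      LinearIndependent ℚ (fun i : Fin 2 => M i) →
      LinearIndependent ℚ (fun j : Fin 2 => M.transpose j) →
      M.det ≠ 0)
    (ε₁ ε₂ x₁ x₂ : ℝ)
    (hε₁alg : IsAlgebraic ℚ ε₁) (hε₂alg : IsAlgebraic ℚ ε₂)
    (hind : LinearIndependent ℚ ![Real.log ε₁, Real.log ε₂])
    (hx₁alg : IsAlgebraic ℚ x₁) (hx₂alg : IsAlgebraic ℚ x₂)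
    (r : ℝ) (h₁ : Real.log x₁ = r * Real.log ε₁) (h₂ : Real.log x₂ = r * Real.log ε₂) :
    ∃ q : ℚ, r = q := by
  set v : Fin 2 → ℂ := fun j => (![Real.log ε₁, Real.log ε₂] j : ℂ)
  have hv : LinearIndependent ℚ v := hind.complex_ofReal
  set M : Matrix (Fin 2) (Fin 2) ℂ := Matrix.of ![v, (r : ℂ) • v]
  have halg : ∀ i j, IsAlgebraic ℚ (Complex.exp (M i j)) := by
    have hx₁' : ((Real.log x₁ : ℝ) : ℂ) = r * Real.log ε₁ := by rw [h₁]; push_cast; rfl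
    have hx₂' : ((Real.log x₂ : ℝ) : ℂ) = r * Real.log ε₂ := by rw [h₂]; push_cast; rfl
    intro i j
    fin_cases i <;> fin_cases j <;>
      simp [M, v, ← hx₁', ← hx₂', isAlgebraic_cexp_ofReal_log, hε₁alg, hε₂alg, hx₁alg, hx₂alg]
  have hcols : LinearIndependent ℚ fun j => M.transpose j := .of_comp (LinearMap.proj 0) hv
  have hdet : M.det = 0 := by
    simp only [M, Matrix.det_fin_two, Matrix.of_apply, Matrix.cons_val_zero, Matrix.cons_val_one,
      Matrix.cons_val_fin_one, Pi.smul_apply, smul_eq_mul]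
    ring
  exact exists_rat_eq_of_not_linearIndependent_pair_smul (fun h => hv.ne_zero 0 (congrFun h 0))
    fun hrows => fourExp M halg hrows hcols hdet

/-- Example 2 of the paper: the Four Exponentials Conjecture implies that if `ε₁, ε₂` are
positive real algebraic numbers with `log ε₁, log ε₂` linearly independent over `ℚ`, and
`x₁, x₂` are positive real algebraic numbers with `log x₁ = r·log ε₁` and
`log x₂ = r·log ε₂` for some real number `r`, then `r` is rational. -/
theorem four_exponentials_implies_ratio_rational
    (fourExp : ∀ M : Matrix (Fin 2) (Fin 2) ℂ,
      (∀ i j, IsAlgebraic ℚ (Complex.exp (M i j))) →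
      LinearIndependent ℚ (fun i : Fin 2 => M i) →
      LinearIndependent ℚ (fun j : Fin 2 => M.transpose j) →
      M.det ≠ 0)
    (ε₁ ε₂ x₁ x₂ : ℝ) (hε₁ : 0 < ε₁) (hε₂ : 0 < ε₂)
    (hε₁alg : IsAlgebraic ℚ ε₁) (hε₂alg : IsAlgebraic ℚ ε₂)
    (hind : LinearIndependent ℚ ![Real.log ε₁, Real.log ε₂])
    (hx₁ : 0 < x₁) (hx₂ : 0 < x₂)
    (hx₁alg : IsAlgebraic ℚ x₁) (hx₂alg : IsAlgebraic ℚ x₂)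
    (r : ℝ) (h₁ : Real.log x₁ = r * Real.log ε₁) (h₂ : Real.log x₂ = r * Real.log ε₂) :
    ∃ q : ℚ, r = q :=
  four_exponentials_implies_ratio_rational_general fourExp ε₁ ε₂ x₁ x₂ hε₁alg hε₂alg hind hx₁alg
    hx₂alg r h₁ h₂
end
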